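/- arXiv:1806.03802 — 6 statements merged into one kernel-verified Lean document; each statement's English description precedes it below -/
import Mathlib

section
/- Let a be a weak composition with nonzero entries in positions n_1 < ... < n_ℓ, and let g be a glide of a (a weak komposition obtainable from a by finitely many local moves (m.1) 0p ⇒ p0, (m.2) 0p ⇒ qr with q+r=p, (m.3) 0p ⇒ q r̄ with q+r=p+1 and r̄ colored red). Then there is at most one weak composition b with b⁺ = a⁺ such that g is a mesonic glide of b. -/
/-! The weight `sum − excess` of a nonempty stretch of a mesonic glide that ends in a nonzero entry
is positive: its red entries are positive and its first nonzero entry is black. Hence a block of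
value `v` cannot be a proper prefix of another block of value `v` followed by a mesonic glide, so
the first block of `g` is determined by the first positive entry of `b`, which `b⁺` fixes; its
length fixes the number of leading zeros, and induction on the rest of `g` gives `b₁ = b₂`. -/

abbrev Komp : Type := List (ℕ × Bool)

def kex (g : Komp) : ℕ := (g.filter (fun p => p.2)).length

def kval (g : Komp) : List ℕ := g.map Prod.fst

def toKomp (a : List ℕ) : Komp := a.map (fun v => (v, false))

inductive GlideMove : Komp → Komp → Prop
  | m1 (l r : Komp) (p : ℕ) (c : Bool) (hp : 0 < p) :
      GlideMove (l ++ (0, false) :: (p, c) :: r) (l ++ (p, c) :: (0, false) :: r)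
  | m2 (l r : Komp) (p q s : ℕ) (c : Bool) (hq : 0 < q) (hs : 0 < s) (h : q + s = p) :
      GlideMove (l ++ (0, false) :: (p, c) :: r) (l ++ (q, c) :: (s, false) :: r)
  | m3 (l r : Komp) (p q s : ℕ) (c : Bool) (hq : 0 < q) (hs : 0 < s) (h : q + s = p + 1) :
      GlideMove (l ++ (0, false) :: (p, c) :: r) (l ++ (q, c) :: (s, true) :: r)

def IsGlide (a : List ℕ) (g : Komp) : Prop :=
  Relation.ReflTransGen GlideMove (toKomp a) g

def BlackFirst (seg : Komp) : Prop :=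
  ∀ p ∈ (seg.dropWhile fun q => q.1 == 0).head?, p.2 = false

def IsBlock (v : ℕ) (seg : Komp) : Prop :=
  (kval seg).sum = v + kex seg ∧
  (∀ p ∈ seg, p.2 = true → 0 < p.1) ∧
  BlackFirst seg ∧
  (∀ p ∈ seg.getLast?, p.1 ≠ 0)

inductive MesonicGlide : List ℕ → Komp → Prop
  | zeros (k : ℕ) :
      MesonicGlide (List.replicate k 0) (List.replicate k ((0 : ℕ), false))
  | block (z v : ℕ) (hv : 0 < v) (seg : Komp) (a' : List ℕ) (g' : Komp)
      (hlen : seg.length = z + 1) (hseg : IsBlock v seg)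
      (h : MesonicGlide a' g') :
      MesonicGlide (List.replicate z 0 ++ v :: a') (seg ++ g')
def Dominates (b a : List ℕ) : Prop :=
  b.length = a.length ∧ ∀ i : ℕ, (a.take i).sum ≤ (b.take i).sum

def posPart (a : List ℕ) : List ℕ := a.filter (fun v => v != 0)

open List

@[simp]
lemma kex_cons (p : ℕ × Bool) (t : Komp) : kex (p :: t) = (if p.2 then 1 else 0) + kex t := by
  cases h : p.2 <;> simp [kex, h, add_comm]

@[simp]
lemma kex_append (l r : Komp) : kex (l ++ r) = kex l + kex r := by
  simp [kex, filter_append]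

@[simp]
lemma sum_kval_cons (p : ℕ × Bool) (t : Komp) : (kval (p :: t)).sum = p.1 + (kval t).sum := by
  simp [kval]

@[simp]
lemma sum_kval_append (l r : Komp) : (kval (l ++ r)).sum = (kval l).sum + (kval r).sum := by
  simp [kval]

lemma kex_le_sum_kval {t : Komp} (hred : ∀ p ∈ t, p.2 = true → 0 < p.1) :
    kex t ≤ (kval t).sum := by
  induction t with
  | nil => simp [kex, kval]
  | cons p t ih =>
    have := ih fun q hq => hred q (mem_cons_of_mem _ hq)
    cases hc : p.2
    · simp only [kex_cons, hc, Bool.false_eq_true, ↓reduceIte, sum_kval_cons]; omega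
    · have := hred p mem_cons_self hc
      simp only [kex_cons, hc, ↓reduceIte, sum_kval_cons]; omega

lemma kex_lt_sum_kval {t r : Komp} (hbf : BlackFirst (t ++ r))
    (hred : ∀ p ∈ t, p.2 = true → 0 < p.1) (hnz : ∃ p ∈ t, p.1 ≠ 0) :
    kex t < (kval t).sum := by
  induction t with
  | nil => simp at hnz
  | cons p t ih =>
    have hred' := fun q hq => hred q (mem_cons_of_mem _ hq)
    by_cases hp : p.1 = 0
    · have hblack : p.2 = false := by
        by_contra h
        have := hred p mem_cons_self (by simpa using h)
        omega
      have hbf' : BlackFirst (t ++ r) := by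
        simpa [BlackFirst, hp] using hbf
      have hnz' : ∃ q ∈ t, q.1 ≠ 0 := by
        simpa [hp] using hnz
      have := ih hbf' hred' hnz'
      simp only [kex_cons, hblack, Bool.false_eq_true, ↓reduceIte, sum_kval_cons, hp]; omega
    · have hblack : p.2 = false := hbf p (by simp [hp])
      have := kex_le_sum_kval hred'
      simp only [kex_cons, hblack, Bool.false_eq_true, ↓reduceIte, sum_kval_cons]; omega

lemma BlackFirst.append {s : Komp} (hs : BlackFirst s) (hnz : ∃ p ∈ s, p.1 ≠ 0) (r : Komp) :
    BlackFirst (s ++ r) := by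
  have hne : s.dropWhile (fun q => q.1 == 0) ≠ [] := by
    obtain ⟨p, hp, hp0⟩ := hnz
    exact fun h => hp0 (by simpa using dropWhile_eq_nil_iff.mp h p hp)
  intro p hp
  rw [dropWhile_append, if_neg (by simpa using hne), head?_append_of_ne_nil _ hne] at hp
  exact hs p hp

lemma IsBlock.exists_ne_zero {v : ℕ} {seg : Komp} (h : IsBlock v seg) (hv : 0 < v) :
    ∃ p ∈ seg, p.1 ≠ 0 := by
  obtain ⟨x, hx, hx0⟩ := exists_mem_ne_zero_of_sum_ne_zero (l := kval seg) (by rw [h.1]; omega)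
  obtain ⟨p, hp, rfl⟩ := mem_map.mp hx
  exact ⟨p, hp, hx0⟩

lemma IsBlock.eq_nil_of_append {v : ℕ} {s t r : Komp} (h₁ : IsBlock v s) (h₂ : IsBlock v (s ++ t))
    (hbf : BlackFirst (t ++ r)) : t = [] := by
  by_contra ht
  have hnz : ∃ p ∈ t, p.1 ≠ 0 :=
    ⟨t.getLast ht, getLast_mem ht,
      h₂.2.2.2 _ (by simp [getLast?_append, getLast?_eq_some_getLast ht])⟩
  have := kex_lt_sum_kval hbf (fun p hp => h₂.2.1 p (mem_append_right s hp)) hnz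
  have := h₁.1
  have := h₂.1
  simp only [kex_append, sum_kval_append] at *
  omega

lemma posPart_replicate_zero (k : ℕ) : posPart (replicate k (0 : ℕ)) = [] := by
  simp [_root_.posPart]

lemma posPart_replicate_zero_append_cons (z : ℕ) {v : ℕ} (hv : 0 < v) (a : List ℕ) :
    posPart (replicate z (0 : ℕ) ++ v :: a) = v :: posPart a := by
  simp [_root_.posPart, hv.ne']

namespace MesonicGlide

variable {b : List ℕ} {g : Komp}

lemma blackFirst (m : MesonicGlide b g) : BlackFirst g := by
  induction m with
  | zeros k =>
    have : (replicate k ((0 : ℕ), false)).dropWhile (fun q => q.1 == 0) = [] :=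
      dropWhile_eq_nil_iff.mpr (by simp [mem_replicate])
    simp [BlackFirst, this]
  | block z v hv seg a' g' hlen hseg h ih =>
    exact hseg.2.2.1.append (hseg.exists_ne_zero hv) g'

lemma block_eq {v : ℕ} {s₁ s₂ g₁ g₂ : Komp} {a₁ a₂ : List ℕ} (hs₁ : IsBlock v s₁)
    (hs₂ : IsBlock v s₂) (m₁ : MesonicGlide a₁ g₁) (m₂ : MesonicGlide a₂ g₂)
    (h : s₁ ++ g₁ = s₂ ++ g₂) : s₁ = s₂ := by
  rcases append_eq_append_iff.mp h with ⟨t, rfl, rfl⟩ | ⟨t, rfl, rfl⟩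
  · rw [hs₁.eq_nil_of_append hs₂ m₁.blackFirst, append_nil]
  · rw [hs₂.eq_nil_of_append hs₁ m₂.blackFirst, append_nil]

lemma eq_of_posPart_eq {b₁ b₂ : List ℕ} (m₁ : MesonicGlide b₁ g) (m₂ : MesonicGlide b₂ g)
    (h : posPart b₁ = posPart b₂) : b₁ = b₂ := by
  induction m₁ generalizing b₂ with
  | zeros k =>
    generalize hg : replicate k ((0 : ℕ), false) = g at m₂
    cases m₂ with
    | zeros k' => simpa using congrArg length hg
    | block z v hv seg a' g' hlen hseg m' =>
      simp [posPart_replicate_zero, posPart_replicate_zero_append_cons z hv] at h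
  | block z v hv seg a' g' hlen hseg m' ih =>
    generalize hg : seg ++ g' = g at m₂
    cases m₂ with
    | zeros k' => simp [posPart_replicate_zero, posPart_replicate_zero_append_cons z hv] at h
    | block z₂ v₂ hv₂ seg₂ a₂ g₂ hlen₂ hseg₂ m₂' =>
      rw [posPart_replicate_zero_append_cons z hv, posPart_replicate_zero_append_cons z₂ hv₂,
        cons.injEq] at h
      obtain ⟨rfl, hpos⟩ := h
      obtain rfl := block_eq hseg hseg₂ m' m₂' hg
      obtain rfl := append_cancel_left hg
      obtain rfl : z = z₂ := by omega
      rw [ih m₂' hpos]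

end MesonicGlide

theorem stmt0_general (a : List ℕ) (g : Komp)
    (b₁ b₂ : List ℕ) (h₁ : posPart b₁ = posPart a) (h₂ : posPart b₂ = posPart a)
    (m₁ : MesonicGlide b₁ g) (m₂ : MesonicGlide b₂ g) : b₁ = b₂ :=
  m₁.eq_of_posPart_eq m₂ (h₁.trans h₂.symm)

theorem stmt0 (a : List ℕ) (g : Komp) (hg : IsGlide a g)
    (b₁ b₂ : List ℕ) (h₁ : posPart b₁ = posPart a) (h₂ : posPart b₂ = posPart a)
    (m₁ : MesonicGlide b₁ g) (m₂ : MesonicGlide b₂ g) : b₁ = b₂ :=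
  stmt0_general a g b₁ b₂ h₁ h₂ m₁ m₂
end

section
/- For weak compositions a and b of the same length, b is obtainable from a by a (possibly empty) sequence of left swaps if and only if the skyline diagram D(b) is obtainable from D(a) by a (possibly empty) sequence of Kohnert moves. -/
/-!
A Kohnert move sends one box down its column. Hence if `D(a)` reaches `D(b)`, then for all `k`
and `c` column `c` of `D(b)` has at least as many boxes in rows `1, …, k` as column `c` of
`D(a)`, and the two columns have the same size. Conversely, this dominance yields a left swap
towards `b`: at the last position `i` where `a` and `b` differ one has `b_i < a_i`, and
exchanging `a_i` with the last `a_t` (`t < i`) lying in `[b_i, a_i)` preserves the dominance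
while decreasing `∑ t * a_t`.

A left swap of `a_i ≤ a_j` is a sequence of Kohnert moves: the boxes of row `j + 1` in the
columns `a_j, a_j - 1, …, a_i + 1` are brought down to row `i + 1` one at a time, each of them
dropping repeatedly to the highest empty cell below it.
-/

def skyline (a : List ℕ) : Finset (ℕ × ℕ) :=
  (Finset.range a.length).biUnion fun i =>
    (Finset.range (a.getD i 0)).image fun j => (i + 1, j + 1)
def KMove (K K' : Finset (ℕ × ℕ)) : Prop :=
  ∃ r c r', (r, c) ∈ K ∧ (∀ c', (r, c') ∈ K → c' ≤ c) ∧
    1 ≤ r' ∧ r' < r ∧ (r', c) ∉ K ∧ (∀ s, r' < s → s < r → (s, c) ∈ K) ∧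
    K' = insert (r', c) (K.erase (r, c))
def LSwapStep (a b : List ℕ) : Prop :=
  ∃ i j, i < j ∧ j < a.length ∧ a.getD i 0 ≤ a.getD j 0 ∧
    b = (a.set i (a.getD j 0)).set j (a.getD i 0)

open Finset Relation

lemma Nat.exists_greatest_lt_of_lt {P : ℕ → Prop} {m n : ℕ} (hmn : m < n) (hm : P m) :
    ∃ k, m ≤ k ∧ k < n ∧ P k ∧ ∀ t, k < t → t < n → ¬P t := by
  classical
  refine ⟨Nat.findGreatest P (n - 1), Nat.le_findGreatest (by omega) hm, ?_,
    Nat.findGreatest_spec (by omega) hm,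
    fun t h₁ h₂ => Nat.findGreatest_is_greatest h₁ (by omega)⟩
  have := Nat.findGreatest_le (P := P) (n - 1)
  omega

lemma List.getD_set_of_lt {α : Type*} {l : List α} {j : ℕ} (hj : j < l.length) (x d : α)
    (t : ℕ) : (l.set j x).getD t d = if t = j then x else l.getD t d := by
  rcases eq_or_ne t j with rfl | h
  · simp [hj]
  · simp [h, h.symm]

lemma List.lt_length_of_getD_ne {α : Type*} {l : List α} {t : ℕ} {d : α} (h : l.getD t d ≠ d) :
    t < l.length := by
  by_contra ht
  exact h (List.getD_eq_default _ _ (by omega))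

lemma sum_getD_set_add {α M : Type*} [AddCommMonoid M] {a : List α} {j : ℕ} (hj : j < a.length)
    (x d : α) (s : Finset ℕ) (g : ℕ → α → M) :
    ∑ t ∈ s, g t ((a.set j x).getD t d) + (if j ∈ s then g j (a.getD j d) else 0)
      = ∑ t ∈ s, g t (a.getD t d) + if j ∈ s then g j x else 0 := by
  have hoff (t : ℕ) (ht : t ≠ j) : g t ((a.set j x).getD t d) = g t (a.getD t d) := by
    rw [List.getD_set_of_lt hj, if_neg ht]
  split_ifs with hs
  · rw [← add_sum_erase s _ hs, ← add_sum_erase s _ hs,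
      sum_congr rfl fun t ht => hoff t (ne_of_mem_erase ht), List.getD_set_of_lt hj, if_pos rfl]
    abel
  · rw [sum_congr rfl fun t ht => hoff t (ne_of_mem_of_not_mem ht hs)]

lemma card_filter_insert_erase {α : Type*} [DecidableEq α] {K : Finset α} {x y : α}
    (hx : x ∈ K) (hy : y ∉ K) (P : α → Prop) [DecidablePred P] :
    #{p ∈ insert y (K.erase x) | P p} + (if P x then 1 else 0)
      = #{p ∈ K | P p} + if P y then 1 else 0 := by
  rw [card_filter, card_filter, sum_insert fun h => hy (mem_of_mem_erase h),
    ← add_sum_erase K _ hx]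
  abel

lemma mem_skyline {a : List ℕ} {x y : ℕ} :
    (x, y) ∈ skyline a ↔ 0 < x ∧ x ≤ a.length ∧ 0 < y ∧ y ≤ a.getD (x - 1) 0 := by
  simp only [skyline, mem_biUnion, mem_range, mem_image, Prod.mk.injEq]
  constructor
  · rintro ⟨i, hi, j, hj, rfl, rfl⟩
    simp only [Nat.add_sub_cancel]
    omega
  · rintro ⟨hx, hxn, hy, hya⟩
    exact ⟨x - 1, by omega, y - 1, by omega, by omega, by omega⟩

theorem reflTransGen_kMove_drop {L : Finset (ℕ × ℕ)} {c s₀ s : ℕ} (hs₀ : 0 < s₀) (hle : s₀ ≤ s)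
    (h₀ : (s₀, c) ∉ L) (hs : (s, c) ∉ L)
    (hrow : ∀ x, s₀ < x → x ≤ s → (x, c) ∉ L → ∀ y, (x, y) ∈ L → y < c) :
    ReflTransGen KMove (insert (s, c) L) (insert (s₀, c) L) := by
  induction s using Nat.strong_induction_on with
  | _ s ih =>
  rcases hle.eq_or_lt with rfl | hlt
  · rfl
  obtain ⟨s', hs₀s', hs's, hs', hfull⟩ :=
    Nat.exists_greatest_lt_of_lt (P := fun x => (x, c) ∉ L) hlt h₀
  refine .head ⟨s, c, s', mem_insert_self _ _, fun y hy => ?_, by omega, hs's, ?_,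
    fun t h₁ h₂ => mem_insert_of_mem (not_not.1 (hfull t h₁ h₂)), by rw [erase_insert hs]⟩
    (ih s' hs's hs₀s' hs' fun x h₁ h₂ => hrow x h₁ (by omega))
  · rcases mem_insert.1 hy with h | h
    · exact (Prod.mk.inj h).2.le
    · exact (hrow s hlt le_rfl hs y h).le
  · simp [hs', hs's.ne]

def movedSkyline (a : List ℕ) (i j c : ℕ) : Finset (ℕ × ℕ) :=
  {p ∈ skyline a | ¬(p.1 = j + 1 ∧ c < p.2)} ∪ (Ioc c (a.getD j 0)).image fun d => (i + 1, d)

section MovedSkyline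

variable {a : List ℕ} {i j : ℕ}

lemma mem_movedSkyline {c x y : ℕ} :
    (x, y) ∈ movedSkyline a i j c ↔
      ((x, y) ∈ skyline a ∧ ¬(x = j + 1 ∧ c < y)) ∨ (x = i + 1 ∧ c < y ∧ y ≤ a.getD j 0) := by
  simp only [movedSkyline, mem_union, mem_filter, mem_image, mem_Ioc, Prod.mk.injEq]
  constructor
  · rintro (h | ⟨d, hd, rfl, rfl⟩)
    · exact .inl h
    · exact .inr ⟨rfl, hd⟩
  · rintro (h | ⟨rfl, hd⟩)
    · exact .inl h
    · exact .inr ⟨y, hd, rfl, rfl⟩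

lemma movedSkyline_getD_self (a : List ℕ) (i j : ℕ) :
    movedSkyline a i j (a.getD j 0) = skyline a := by
  ext ⟨x, y⟩
  rw [mem_movedSkyline, mem_skyline]
  rcases eq_or_ne x (j + 1) with rfl | hx
  · simp only [Nat.add_sub_cancel]
    omega
  · omega

lemma movedSkyline_getD_eq_skyline_lSwap (hij : i < j) (hj : j < a.length)
    (hle : a.getD i 0 ≤ a.getD j 0) :
    movedSkyline a i j (a.getD i 0) = skyline ((a.set i (a.getD j 0)).set j (a.getD i 0)) := by
  ext ⟨x, y⟩
  rw [mem_movedSkyline, mem_skyline, mem_skyline, List.length_set, List.length_set,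
    List.getD_set_of_lt (by simpa), List.getD_set_of_lt (by omega)]
  split_ifs with hxj hxi
  · rw [hxj]
    omega
  · rw [hxi]
    omega
  · omega

lemma reflTransGen_kMove_movedSkyline_succ (hij : i < j) (hj : j < a.length) {c : ℕ}
    (hic : a.getD i 0 ≤ c) (hcj : c < a.getD j 0) :
    ReflTransGen KMove (movedSkyline a i j (c + 1)) (movedSkyline a i j c) := by
  set L := (movedSkyline a i j (c + 1)).erase (j + 1, c + 1)
  have hmem : (j + 1, c + 1) ∈ movedSkyline a i j (c + 1) := by
    rw [mem_movedSkyline, mem_skyline]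
    simp only [Nat.add_sub_cancel]
    omega
  have hL : insert (i + 1, c + 1) L = movedSkyline a i j c := by
    ext ⟨x, y⟩
    simp only [L, mem_insert, mem_erase, mem_movedSkyline, mem_skyline, ne_eq, Prod.mk.injEq]
    rcases eq_or_ne x (i + 1) with rfl | hxi
    · simp only [Nat.add_sub_cancel, true_and]
      omega
    rcases eq_or_ne x (j + 1) with rfl | hxj
    · simp only [Nat.add_sub_cancel, true_and]
      omega
    omega
  have := reflTransGen_kMove_drop (L := L) (s₀ := i + 1) (s := j + 1) (by omega) (by omega) ?_
    (notMem_erase _ _) ?_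
  · rwa [insert_erase hmem, hL] at this
  · simp only [L, mem_erase, mem_movedSkyline, mem_skyline, Nat.add_sub_cancel]
    omega
  · intro x hx₁ hx₂ hx y hy
    simp only [L, mem_erase, mem_movedSkyline, mem_skyline, ne_eq, Prod.mk.injEq] at hx hy
    omega

end MovedSkyline

lemma LSwapStep.reflTransGen_kMove {a b : List ℕ} (h : LSwapStep a b) :
    ReflTransGen KMove (skyline a) (skyline b) := by
  obtain ⟨i, j, hij, hj, hle, rfl⟩ := h
  rw [← movedSkyline_getD_self a i j, ← movedSkyline_getD_eq_skyline_lSwap hij hj hle]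
  exact ReflTransGen.lift' (movedSkyline a i j) (fun _ _ => id) _ _
    (reflTransGen_of_succ_of_ge (fun c c' => ReflTransGen KMove (movedSkyline a i j c)
      (movedSkyline a i j c')) (fun _ hc => reflTransGen_kMove_movedSkyline_succ hij hj hc.1 hc.2)
      hle)

/-- The number of boxes of `D(a)` in column `c` and in the rows `t + 1`, `t ∈ s`. -/
def colCount (a : List ℕ) (s : Finset ℕ) (c : ℕ) : ℕ :=
  #{t ∈ s | c ≤ a.getD t 0}

def boxesBelow (K : Finset (ℕ × ℕ)) (k c : ℕ) : ℕ :=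
  #{p ∈ K | p.2 = c ∧ p.1 ≤ k}

def colSize (K : Finset (ℕ × ℕ)) (c : ℕ) : ℕ :=
  #{p ∈ K | p.2 = c}

namespace KMove

variable {K K' : Finset (ℕ × ℕ)}

lemma boxesBelow_le (h : KMove K K') (k c : ℕ) : boxesBelow K k c ≤ boxesBelow K' k c := by
  obtain ⟨r, c₀, r', hmem, -, -, hr, hnot, -, rfl⟩ := h
  have := card_filter_insert_erase hmem hnot fun p : ℕ × ℕ => p.2 = c ∧ p.1 ≤ k
  unfold boxesBelow
  split_ifs at this <;> omega

lemma colSize_eq (h : KMove K K') (c : ℕ) : colSize K c = colSize K' c := by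
  obtain ⟨r, c₀, r', hmem, -, -, -, hnot, -, rfl⟩ := h
  have := card_filter_insert_erase hmem hnot fun p : ℕ × ℕ => p.2 = c
  unfold colSize
  split_ifs at this <;> omega

lemma boxesBelow_le_of_reflTransGen (h : ReflTransGen KMove K K') (k c : ℕ) :
    boxesBelow K k c ≤ boxesBelow K' k c := by
  induction h with
  | refl => rfl
  | tail _ hstep ih => exact ih.trans (hstep.boxesBelow_le k c)

lemma colSize_eq_of_reflTransGen (h : ReflTransGen KMove K K') (c : ℕ) :
    colSize K c = colSize K' c := by
  induction h with
  | refl => rfl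
  | tail _ hstep ih => exact ih.trans (hstep.colSize_eq c)

end KMove

lemma boxesBelow_skyline (a : List ℕ) (k : ℕ) {c : ℕ} (hc : 0 < c) :
    boxesBelow (skyline a) k c = colCount a (range k) c := by
  refine card_nbij' (fun p => p.1 - 1) (fun t => (t + 1, c)) ?_ ?_ ?_ ?_
  · rintro ⟨x, y⟩ hp
    simp only [coe_filter, Set.mem_ofPred_eq, mem_skyline, mem_range] at hp ⊢
    omega
  · intro t ht
    simp only [coe_filter, Set.mem_ofPred_eq, mem_skyline, mem_range] at ht ⊢
    have := List.lt_length_of_getD_ne (ht.2.trans_lt' hc).ne'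
    simp only [Nat.add_sub_cancel, true_and]
    omega
  · rintro ⟨x, y⟩ hp
    simp only [coe_filter, Set.mem_ofPred_eq, mem_skyline, Prod.mk.injEq] at hp ⊢
    omega
  · intro t _
    simp

lemma colSize_skyline (a : List ℕ) {c : ℕ} (hc : 0 < c) :
    colSize (skyline a) c = colCount a (range a.length) c := by
  rw [← boxesBelow_skyline a _ hc, colSize, boxesBelow]
  congr 1
  refine filter_congr fun ⟨x, y⟩ hp => ?_
  rw [mem_skyline] at hp
  simp only [iff_self_and]
  omega

lemma colCount_zero (a : List ℕ) (s : Finset ℕ) : colCount a s 0 = #s := by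
  simp [colCount]

section ReflTransGen

variable {a b : List ℕ} (h : ReflTransGen KMove (skyline a) (skyline b))
include h

lemma colCount_le_of_reflTransGen_kMove (k c : ℕ) :
    colCount a (range k) c ≤ colCount b (range k) c := by
  rcases c.eq_zero_or_pos with rfl | hc
  · simp [colCount_zero]
  rw [← boxesBelow_skyline a k hc, ← boxesBelow_skyline b k hc]
  exact KMove.boxesBelow_le_of_reflTransGen h k c

lemma colCount_length_eq_of_reflTransGen_kMove (hlen : a.length = b.length) (c : ℕ) :
    colCount a (range a.length) c = colCount b (range b.length) c := by
  rcases c.eq_zero_or_pos with rfl | hc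
  · simp [colCount_zero, hlen]
  rw [← colSize_skyline a hc, ← colSize_skyline b hc]
  exact KMove.colSize_eq_of_reflTransGen h c

end ReflTransGen

lemma colCount_range_succ (a : List ℕ) (k c : ℕ) :
    colCount a (range (k + 1)) c = colCount a (range k) c + if c ≤ a.getD k 0 then 1 else 0 := by
  simp only [colCount, card_filter]
  exact sum_range_succ _ _

lemma colCount_range_add_Ico (a : List ℕ) (c : ℕ) {k m : ℕ} (h : k ≤ m) :
    colCount a (range k) c + colCount a (Ico k m) c = colCount a (range m) c := by
  simp only [colCount, card_filter]
  exact sum_range_add_sum_Ico _ h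

lemma colCount_lt_colCount {a : List ℕ} {s : Finset ℕ} {c c' t : ℕ} (hcc' : c ≤ c') (ht : t ∈ s)
    (hc : c ≤ a.getD t 0) (hc' : a.getD t 0 < c') : colCount a s c' < colCount a s c := by
  refine card_lt_card ((ssubset_iff_of_subset ?_).2 ⟨t, mem_filter.2 ⟨ht, hc⟩, ?_⟩)
  · exact monotone_filter_right s fun _ _ h => hcc'.trans h
  · simp only [mem_filter, not_and, not_le]
    exact fun _ => hc'

lemma colCount_set {a : List ℕ} {j : ℕ} (hj : j < a.length) (x : ℕ) (s : Finset ℕ) (c : ℕ) :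
    colCount (a.set j x) s c + (if j ∈ s ∧ c ≤ a.getD j 0 then 1 else 0)
      = colCount a s c + if j ∈ s ∧ c ≤ x then 1 else 0 := by
  have := sum_getD_set_add hj x 0 s fun _ v => if c ≤ v then 1 else 0
  simp only [colCount, card_filter]
  by_cases hs : j ∈ s <;> simp_all

lemma colCount_lSwap {a : List ℕ} {i j : ℕ} (hij : i < j) (hj : j < a.length)
    (hle : a.getD i 0 ≤ a.getD j 0) (k c : ℕ) :
    colCount ((a.set i (a.getD j 0)).set j (a.getD i 0)) (range k) c
      = colCount a (range k) c
        + if i < k ∧ k ≤ j ∧ a.getD i 0 < c ∧ c ≤ a.getD j 0 then 1 else 0 := by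
  have h₁ := colCount_set (a := a.set i (a.getD j 0)) (by simpa) (a.getD i 0) (range k) c
  have h₂ := colCount_set (a := a) (j := i) (by omega) (a.getD j 0) (range k) c
  rw [List.getD_set_of_lt (by omega), if_neg hij.ne'] at h₁
  simp only [mem_range] at h₁ h₂
  split_ifs at h₁ h₂ ⊢ <;> omega

def weightedSum (a : List ℕ) : ℕ :=
  ∑ t ∈ range a.length, t * a.getD t 0

lemma weightedSum_lSwap_lt {a : List ℕ} {i j : ℕ} (hij : i < j) (hj : j < a.length)
    (hlt : a.getD i 0 < a.getD j 0) :
    weightedSum ((a.set i (a.getD j 0)).set j (a.getD i 0)) < weightedSum a := by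
  have h₁ := sum_getD_set_add (a := a.set i (a.getD j 0)) (by simpa) (a.getD i 0) 0
    (range a.length) fun t v => t * v
  have h₂ := sum_getD_set_add (a := a) (j := i) (by omega) (a.getD j 0) 0
    (range a.length) fun t v => t * v
  rw [List.getD_set_of_lt (by omega), if_neg hij.ne'] at h₁
  simp only [mem_range, hj, hij.trans hj, if_true] at h₁ h₂
  simp only [weightedSum, List.length_set]
  nlinarith

section Dominance

variable {a b : List ℕ}

lemma exists_last_getD_ne (hlen : a.length = b.length) (hab : a ≠ b) :
    ∃ i < a.length, a.getD i 0 ≠ b.getD i 0 ∧ ∀ t, i < t → a.getD t 0 = b.getD t 0 := by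
  obtain ⟨t, ht, hne⟩ : ∃ t < a.length, a.getD t 0 ≠ b.getD t 0 := by
    by_contra! h
    refine hab (List.ext_getElem hlen fun t h₁ h₂ => ?_)
    have := h t h₁
    rwa [List.getD_eq_getElem _ _ h₁, List.getD_eq_getElem _ _ h₂] at this
  obtain ⟨i, -, hi, hne, hlast⟩ :=
    Nat.exists_greatest_lt_of_lt (P := fun t => a.getD t 0 ≠ b.getD t 0) ht hne
  refine ⟨i, hi, hne, fun t hit => ?_⟩
  by_cases htn : t < a.length
  · exact not_not.1 (hlast t hit htn)
  · rw [List.getD_eq_default _ _ (by omega), List.getD_eq_default _ _ (by omega)]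

lemma colCount_lt_of_forall_not_mem_Ico {i k c : ℕ} (hki : k ≤ i) (hbc : b.getD i 0 < c)
    (hca : c ≤ a.getD i 0)
    (hpre : ∀ x, colCount a (range (i + 1)) x = colCount b (range (i + 1)) x)
    (hdom : colCount a (range k) (b.getD i 0) ≤ colCount b (range k) (b.getD i 0))
    (hgap : ∀ t, k ≤ t → t < i → a.getD t 0 < b.getD i 0 ∨ a.getD i 0 ≤ a.getD t 0) :
    colCount a (range k) c < colCount b (range k) c := by
  have hA : colCount a (Ico k (i + 1)) c = colCount a (Ico k (i + 1)) (b.getD i 0) := by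
    unfold colCount
    congr 1
    refine filter_congr fun t ht => ?_
    rw [mem_Ico] at ht
    rcases (Nat.lt_succ_iff.1 ht.2).eq_or_lt with rfl | hti
    · omega
    · have := hgap t ht.1 hti
      omega
  have hB : colCount b (Ico k (i + 1)) c < colCount b (Ico k (i + 1)) (b.getD i 0) :=
    colCount_lt_colCount hbc.le (by simp; omega) le_rfl hbc
  have ha₁ := colCount_range_add_Ico a c (show k ≤ i + 1 by omega)
  have ha₂ := colCount_range_add_Ico a (b.getD i 0) (show k ≤ i + 1 by omega)
  have hb₁ := colCount_range_add_Ico b c (show k ≤ i + 1 by omega)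
  have hb₂ := colCount_range_add_Ico b (b.getD i 0) (show k ≤ i + 1 by omega)
  have := hpre c
  have := hpre (b.getD i 0)
  omega

lemma exists_lSwapStep_of_colCount (hlen : a.length = b.length)
    (hdom : ∀ k c, colCount a (range k) c ≤ colCount b (range k) c)
    (htot : ∀ c, colCount a (range a.length) c = colCount b (range b.length) c) (hab : a ≠ b) :
    ∃ a', LSwapStep a a' ∧ weightedSum a' < weightedSum a ∧ a'.length = b.length ∧
      (∀ k c, colCount a' (range k) c ≤ colCount b (range k) c) ∧
      ∀ c, colCount a' (range a'.length) c = colCount b (range b.length) c := by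
  obtain ⟨i, hi, hne, htail⟩ := exists_last_getD_ne hlen hab
  have hpre (c : ℕ) : colCount a (range (i + 1)) c = colCount b (range (i + 1)) c := by
    have ha := colCount_range_add_Ico a c (show i + 1 ≤ a.length by omega)
    have hb := colCount_range_add_Ico b c (show i + 1 ≤ a.length by omega)
    have hIco : colCount a (Ico (i + 1) a.length) c = colCount b (Ico (i + 1) a.length) c := by
      unfold colCount
      congr 1
      exact filter_congr fun t ht => by rw [htail t (mem_Ico.1 ht).1]
    have := htot c
    rw [← hlen] at this
    omega
  have hbi : b.getD i 0 < a.getD i 0 := by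
    have h₁ := hpre (a.getD i 0 + 1)
    have h₂ := hdom i (a.getD i 0 + 1)
    rw [colCount_range_succ, colCount_range_succ] at h₁
    split_ifs at h₁ <;> omega
  -- Otherwise the previous lemma with `k = 0` would give `0 < 0`.
  obtain ⟨t, hti, ht⟩ : ∃ t < i, b.getD i 0 ≤ a.getD t 0 ∧ a.getD t 0 < a.getD i 0 := by
    by_contra! h
    refine (colCount_lt_of_forall_not_mem_Ico (Nat.zero_le i) hbi le_rfl hpre
      (by simp [colCount]) fun t _ hti => ?_).false
    have := h t hti
    omega
  obtain ⟨t₀, -, ht₀, ⟨hbt₀, ht₀a⟩, hgap⟩ := Nat.exists_greatest_lt_of_lt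
    (P := fun t => b.getD i 0 ≤ a.getD t 0 ∧ a.getD t 0 < a.getD i 0) hti ht
  refine ⟨_, ⟨t₀, i, ht₀, hi, ht₀a.le, rfl⟩, weightedSum_lSwap_lt ht₀ hi ht₀a, by simpa,
    fun k c => ?_, fun c => ?_⟩
  · rw [colCount_lSwap ht₀ hi ht₀a.le]
    split_ifs with h
    · refine colCount_lt_of_forall_not_mem_Ico h.2.1 (by omega) h.2.2.2 hpre (hdom k _)
        fun t ht hti => ?_
      have := hgap t (by omega) hti
      omega
    · simpa using hdom k c
  · rw [List.length_set, List.length_set, colCount_lSwap ht₀ hi ht₀a.le, if_neg (by omega),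
      add_zero, htot]

end Dominance

theorem reflTransGen_lSwapStep_of_colCount {a b : List ℕ} (hlen : a.length = b.length)
    (hdom : ∀ k c, colCount a (range k) c ≤ colCount b (range k) c)
    (htot : ∀ c, colCount a (range a.length) c = colCount b (range b.length) c) :
    ReflTransGen LSwapStep a b := by
  by_cases hab : a = b
  · exact hab ▸ .refl
  obtain ⟨a', hstep, hw, hlen', hdom', htot'⟩ := exists_lSwapStep_of_colCount hlen hdom htot hab
  exact .head hstep (reflTransGen_lSwapStep_of_colCount hlen' hdom' htot')
termination_by weightedSum a
decreasing_by exact hw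

theorem stmt3 (a b : List ℕ) (hlen : a.length = b.length) :
    Relation.ReflTransGen LSwapStep a b ↔
      Relation.ReflTransGen KMove (skyline a) (skyline b) :=
  ⟨ReflTransGen.lift' skyline (fun _ _ => LSwapStep.reflTransGen_kMove) a b,
    fun h => reflTransGen_lSwapStep_of_colCount hlen (colCount_le_of_reflTransGen_kMove h)
      (colCount_length_eq_of_reflTransGen_kMove h hlen)⟩
end

section
/- Let a be a weak composition and let T, U be two distinct fillings in KeySSF(a) (semistandard skyline fillings with basement b_i = n−i+1 of shape the reverse of a). Then there exists a column in which the set of labels appearing in T differs from the set of labels appearing in U. -/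
def revShape (a : List ℕ) (i : ℕ) : ℕ := a.reverse.getD (i - 1) 0

def IsBox (a : List ℕ) (i j : ℕ) : Prop :=
  1 ≤ i ∧ i ≤ a.length ∧ 1 ≤ j ∧ j ≤ revShape a i

def IsBoxB (a : List ℕ) (i j : ℕ) : Prop :=
  (j = 0 ∧ 1 ≤ i ∧ i ≤ a.length) ∨ IsBox a i j

def InvTriple (be al ga : ℕ) : Prop := (ga < al ∧ al ≤ be) ∨ (al ≤ be ∧ be < ga)

def KeySSF (a : List ℕ) (T : ℕ → ℕ → ℕ) : Prop :=
  (∀ i, 1 ≤ i → i ≤ a.length → T i 0 = a.length - i + 1) ∧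
  (∀ j i i', IsBoxB a i j → IsBoxB a i' j → i ≠ i' → T i j ≠ T i' j) ∧
  (∀ i j, IsBoxB a i j → IsBoxB a i (j + 1) → T i (j + 1) ≤ T i j) ∧
  (∀ i i' j, i < i' → IsBoxB a i j → IsBoxB a i (j + 1) → IsBoxB a i' (j + 1) →
      revShape a i' ≤ revShape a i → InvTriple (T i j) (T i (j + 1)) (T i' (j + 1))) ∧
  (∀ i i' j, i < i' → IsBoxB a i' j → IsBoxB a i' (j + 1) → IsBoxB a i j →
      revShape a i < revShape a i' → InvTriple (T i' j) (T i' (j + 1)) (T i j))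

lemma getD_le_sum (l : List ℕ) (k : ℕ) : l.getD k 0 ≤ l.sum := by
  induction l generalizing k with
  | nil => simp
  | cons x xs ih =>
    cases k with
    | zero => simp
    | succ k => simpa using le_trans (ih k) (by simp)

lemma revShape_le_sum (a : List ℕ) (i : ℕ) : revShape a i ≤ a.sum := by
  unfold revShape
  simpa [List.sum_reverse] using getD_le_sum a.reverse (i - 1)

lemma boxB_of_le {a : List ℕ} {i j : ℕ} (h1 : 1 ≤ i) (h2 : i ≤ a.length)
    (h3 : j ≤ revShape a i) : IsBoxB a i j := by
  cases j with
  | zero => exact Or.inl ⟨rfl, h1, h2⟩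
  | succ j => exact Or.inr ⟨h1, h2, Nat.succ_le_succ (Nat.zero_le j), h3⟩

/-- Non-crossing lemma: if `i < i'` and row `i'` is (weakly) shorter than row `i`,
then in any filling row `i` stays strictly above row `i'` in every column. -/
lemma nc4 {a : List ℕ} {F : ℕ → ℕ → ℕ} (hF : KeySSF a F) {i i' : ℕ}
    (h1 : 1 ≤ i) (hii : i < i') (hn : i' ≤ a.length)
    (hsh : revShape a i' ≤ revShape a i) :
    ∀ e, e ≤ revShape a i' → F i' e < F i e := by
  have hin : i ≤ a.length := le_trans (Nat.le_of_lt hii) hn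
  have h1' : 1 ≤ i' := le_trans h1 (Nat.le_of_lt hii)
  intro e
  induction e with
  | zero =>
    intro _
    rw [hF.1 i h1 hin, hF.1 i' h1' hn]
    omega
  | succ e ih =>
    intro he
    have he' : e ≤ revShape a i' := by omega
    have hIH : F i' e < F i e := ih he'
    have hbie : IsBoxB a i e := boxB_of_le h1 hin (le_trans he' hsh)
    have hbi'e : IsBoxB a i' e := boxB_of_le h1' hn he'
    have hbie1 : IsBoxB a i (e + 1) := boxB_of_le h1 hin (le_trans he hsh)
    have hbi'e1 : IsBoxB a i' (e + 1) := boxB_of_le h1' hn he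
    have hrow : F i' (e + 1) ≤ F i' e := hF.2.2.1 i' e hbi'e hbi'e1
    have htri := hF.2.2.2.1 i i' e hii hbie hbie1 hbi'e1 hsh
    rcases htri with ⟨ha, hb⟩ | ⟨ha, hb⟩ <;> omega

/-- Core contradiction at the rightmost differing column with the minimal
differing value `v`. -/
lemma core {a : List ℕ} {T U : ℕ → ℕ → ℕ} {e v i i' : ℕ}
    (hT : KeySSF a T) (hU : KeySSF a U)
    (hbi : IsBox a i e) (hbi' : IsBox a i' e) (hne : i ≠ i')
    (hTi : T i e = v) (hUi' : U i' e = v)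
    (hs : v < U i e) (ht : v < T i' e)
    (hcom : ∀ r, IsBox a r (e + 1) → T r (e + 1) = U r (e + 1)) : False := by
  obtain ⟨h1i, hni, he1, hei⟩ := hbi
  obtain ⟨h1i', hni', -, hei'⟩ := hbi'
  rcases lt_or_gt_of_ne hne with hii | hii
  · rcases le_or_gt (revShape a i') (revShape a i) with hsh | hsh
    · -- case A: non-crossing in T
      have := nc4 hT h1i hii hni' hsh e hei'
      omega
    · -- case B1: cond5 in T at (e, e+1), common value at (i', e+1)
      have hb1 : IsBox a i' (e + 1) := ⟨h1i', hni', by omega, by omega⟩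
      have hx : T i' (e + 1) = U i' (e + 1) := hcom i' hb1
      have hrow : U i' (e + 1) ≤ U i' e :=
        hU.2.2.1 i' e (Or.inr ⟨h1i', hni', by omega, hei'⟩) (Or.inr hb1)
      have htri := hT.2.2.2.2 i i' e hii (Or.inr ⟨h1i', hni', by omega, hei'⟩)
        (Or.inr hb1) (Or.inr ⟨h1i, hni, he1, hei⟩) hsh
      rcases htri with ⟨ha, hb⟩ | ⟨ha, hb⟩ <;> omega
  · rcases le_or_gt (revShape a i) (revShape a i') with hsh | hsh
    · -- case A': non-crossing in U
      have := nc4 hU h1i' hii hni hsh e hei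
      omega
    · -- case B2: cond5 in U at (e, e+1), common value at (i, e+1)
      have hb1 : IsBox a i (e + 1) := ⟨h1i, hni, by omega, by omega⟩
      have hx : T i (e + 1) = U i (e + 1) := hcom i hb1
      have hrow : T i (e + 1) ≤ T i e :=
        hT.2.2.1 i e (Or.inr ⟨h1i, hni, he1, hei⟩) (Or.inr hb1)
      have htri := hU.2.2.2.2 i' i e hii (Or.inr ⟨h1i, hni, he1, hei⟩)
        (Or.inr hb1) (Or.inr ⟨h1i', hni', by omega, hei'⟩) hsh
      rcases htri with ⟨ha, hb⟩ | ⟨ha, hb⟩ <;> omega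

theorem stmt5 (a : List ℕ) (T U : ℕ → ℕ → ℕ)
    (hT : KeySSF a T) (hU : KeySSF a U)
    (hne : ∃ i j, IsBox a i j ∧ T i j ≠ U i j) :
    ∃ c, 1 ≤ c ∧
      {v | ∃ i, IsBox a i c ∧ T i c = v} ≠ {v | ∃ i, IsBox a i c ∧ U i c = v} := by
  classical
  by_contra hcon
  push_neg at hcon
  obtain ⟨i₁, j₁, hbox₁, hne₁⟩ := hne
  set P : ℕ → Prop := fun e => ∃ i, IsBox a i e ∧ T i e ≠ U i e with hPdef
  have hP₁ : P j₁ := ⟨i₁, hbox₁, hne₁⟩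
  have hj₁B : j₁ ≤ a.sum := le_trans hbox₁.2.2.2 (revShape_le_sum a i₁)
  set estar : ℕ := Nat.findGreatest P a.sum with hestar
  have hPe : P estar := Nat.findGreatest_spec hj₁B hP₁
  obtain ⟨i₂, hbox₂, hne₂⟩ := hPe
  have he1 : 1 ≤ estar := hbox₂.2.2.1
  have hcom : ∀ r, IsBox a r (estar + 1) → T r (estar + 1) = U r (estar + 1) := by
    intro r hb
    by_contra hc
    exact Nat.findGreatest_is_greatest (Nat.lt_succ_self estar)
      (le_trans hb.2.2.2 (revShape_le_sum a r)) ⟨r, hb, hc⟩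
  have hmem : ∀ v, (∃ i, IsBox a i estar ∧ T i estar = v) ↔
      (∃ i, IsBox a i estar ∧ U i estar = v) := by
    intro v
    have := Set.ext_iff.mp (hcon estar he1) v
    simpa using this
  set Q : ℕ → Prop := fun v => ∃ i, IsBox a i estar ∧ T i estar ≠ U i estar ∧
    (T i estar = v ∨ U i estar = v) with hQdef
  have hQex : ∃ v, Q v := ⟨T i₂ estar, i₂, hbox₂, hne₂, Or.inl rfl⟩
  set vstar : ℕ := Nat.find hQex with hvstar
  have hQv : Q vstar := Nat.find_spec hQex
  have hminQ : ∀ w, Q w → vstar ≤ w := fun w hw =>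
    le_of_not_gt fun hlt => Nat.find_min hQex hlt hw
  obtain ⟨i₀, hb₀, hne₀, hor⟩ := hQv
  rcases hor with hT0 | hU0
  · -- T i₀ estar = vstar
    obtain ⟨i', hb', hU'⟩ := (hmem vstar).mp ⟨i₀, hb₀, hT0⟩
    have hii' : i₀ ≠ i' := by
      rintro rfl
      exact hne₀ (hT0.trans hU'.symm)
    have hsne : U i₀ estar ≠ vstar := fun h => hne₀ (hT0.trans h.symm)
    have hs : vstar < U i₀ estar :=
      lt_of_le_of_ne (hminQ _ ⟨i₀, hb₀, hne₀, Or.inr rfl⟩) (Ne.symm hsne)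
    have htne : T i' estar ≠ vstar := by
      intro h
      exact hT.2.1 estar i₀ i' (Or.inr hb₀) (Or.inr hb') hii' (hT0.trans h.symm)
    have htQ : Q (T i' estar) :=
      ⟨i', hb', fun h => htne (h.trans hU'), Or.inl rfl⟩
    have ht : vstar < T i' estar := lt_of_le_of_ne (hminQ _ htQ) (Ne.symm htne)
    exact core hT hU hb₀ hb' hii' hT0 hU' hs ht hcom
  · -- U i₀ estar = vstar : apply core with T and U swapped
    obtain ⟨i', hb', hT'⟩ := (hmem vstar).mpr ⟨i₀, hb₀, hU0⟩
    have hii' : i₀ ≠ i' := by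
      rintro rfl
      exact hne₀ (hT'.trans hU0.symm)
    have hsne : T i₀ estar ≠ vstar := fun h => hne₀ (h.trans hU0.symm)
    have hs : vstar < T i₀ estar :=
      lt_of_le_of_ne (hminQ _ ⟨i₀, hb₀, hne₀, Or.inl rfl⟩) (Ne.symm hsne)
    have htne : U i' estar ≠ vstar := by
      intro h
      exact hU.2.1 estar i₀ i' (Or.inr hb₀) (Or.inr hb') hii' (hU0.trans h.symm)
    have htQ : Q (U i' estar) :=
      ⟨i', hb', fun h => htne (h.symm.trans hT'), Or.inr rfl⟩
    have ht : vstar < U i' estar := lt_of_le_of_ne (hminQ _ htQ) (Ne.symm htne)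
    exact core hU hT hb₀ hb' hii' hU0 hT' hs ht
      (fun r hb => (hcom r hb).symm)
end

section
/- The quasiLascoux polynomial Q̄_a stabilizes to the quasiGrothendieck function: for a weak composition a, lim_{m→∞} Q̄_{0^m × a}(x_1, x_2, ...) = S̄_{a⁺}(x_1, x_2, ...). Concretely, for each m, Q̄_{0^m × a}(x_1,...,x_m) = S̄_{a⁺}(x_1,...,x_m). -/
abbrev SVF : Type := ℕ → ℕ → Finset ℕ

def shapeLen (b : List ℕ) (i : ℕ) : ℕ := b.getD (i - 1) 0

def SBox (b : List ℕ) (i j : ℕ) : Prop :=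
  1 ≤ i ∧ i ≤ b.length ∧ 1 ≤ j ∧ j ≤ shapeLen b i

def anc (F : SVF) (i j : ℕ) : ℕ := (F i j).sup id

noncomputable def infv (F : SVF) (i j : ℕ) : ℕ := sInf (F i j : Set ℕ)

def RowOK (b : List ℕ) (F : SVF) (i j v : ℕ) : Prop :=
  (j = 1 ∨ v ≤ infv F i (j - 1)) ∧ (¬ SBox b i (j + 1) ∨ anc F i (j + 1) ≤ v)

def SVSSF (b : List ℕ) (F : SVF) : Prop :=
  (∀ i j, (F i j).Nonempty ↔ SBox b i j) ∧
  (∀ i j v, v ∈ F i j → 0 < v) ∧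
  (∀ j i i', i ≠ i' → ∀ v, v ∈ F i j → v ∉ F i' j) ∧
  (∀ i j, SBox b i j → SBox b i (j + 1) → anc F i (j + 1) ≤ infv F i j) ∧
  (∀ i i' j, i < i' → SBox b i j → SBox b i (j + 1) → SBox b i' (j + 1) →
      shapeLen b i' ≤ shapeLen b i → InvTriple (anc F i j) (anc F i (j + 1)) (anc F i' (j + 1))) ∧
  (∀ i i' j, i < i' → SBox b i' j → SBox b i' (j + 1) → SBox b i j →
      shapeLen b i < shapeLen b i' → InvTriple (anc F i' j) (anc F i' (j + 1)) (anc F i j)) ∧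
  (∀ i j v, SBox b i j → v ∈ F i j → v ≠ anc F i j →
      ∀ i', SBox b i' j → anc F i' j < anc F i j → v < anc F i' j → ¬ RowOK b F i' j v)

def LASSF (b : List ℕ) (F : SVF) : Prop :=
  SVSSF b F ∧ ∀ i, SBox b i 1 → anc F i 1 = i

def wtF (b : List ℕ) (F : SVF) (v : ℕ) : ℕ :=
  ((skyline b).filter fun p => v ∈ F p.1 p.2).card

def sizeF (b : List ℕ) (F : SVF) : ℕ := ∑ p ∈ skyline b, (F p.1 p.2).card
noncomputable def vmono (w : ℕ → ℕ) : MvPolynomial ℕ (Polynomial ℤ) :=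
  ∏ᶠ v, MvPolynomial.X v ^ w v

noncomputable def atomPoly (b : List ℕ) : MvPolynomial ℕ (Polynomial ℤ) :=
  ∑ᶠ F ∈ {F : SVF | LASSF b F},
    MvPolynomial.C (Polynomial.X ^ (sizeF b F - b.sum)) * vmono (wtF b F)

noncomputable def quasiLascoux (a : List ℕ) : MvPolynomial ℕ (Polynomial ℤ) :=
  ∑ᶠ b ∈ {b : List ℕ | Dominates b a ∧ posPart b = posPart a}, atomPoly b

noncomputable def quasiGroth (m : ℕ) (α : List ℕ) : MvPolynomial ℕ (Polynomial ℤ) :=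
  ∑ᶠ b ∈ {b : List ℕ | b.length = m ∧ posPart b = α}, atomPoly b

section Lists

lemma posPart_append_replicate_zero (l : List ℕ) (k : ℕ) :
    posPart (l ++ List.replicate k (0 : ℕ)) = posPart l := by
  simp [_root_.posPart]

lemma posPart_replicate_zero_append (k : ℕ) (l : List ℕ) :
    posPart (List.replicate k (0 : ℕ) ++ l) = posPart l := by
  simp [_root_.posPart]

lemma sum_posPart (l : List ℕ) : (posPart l).sum = l.sum := by
  induction l with
  | nil => rfl
  | cons x t ih => by_cases hx : x = 0 <;> simp_all [_root_.posPart]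

lemma count_zero_add_length_posPart (l : List ℕ) :
    l.count 0 + (posPart l).length = l.length := by
  induction l with
  | nil => rfl
  | cons x t ih => by_cases hx : x = 0 <;> simp_all [_root_.posPart] <;> omega

lemma perm_of_posPart_eq {b c : List ℕ} (hl : b.length = c.length)
    (hp : posPart b = posPart c) : b.Perm c := by
  rw [List.perm_iff_count]
  intro x
  by_cases hx : x = 0
  · subst hx
    have hb := count_zero_add_length_posPart b
    have hc := count_zero_add_length_posPart c
    rw [hp] at hb
    omega
  · have hx' : (x != 0) = true := by simpa using hx
    rw [← List.count_filter (p := fun v => v != 0) (l := b) hx',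
      ← List.count_filter (p := fun v => v != 0) (l := c) hx']
    exact congrArg (List.count x) hp

lemma dominates_append_replicate {b a : List ℕ} {m : ℕ} (hb : b.length = m)
    (hsum : b.sum = a.sum) :
    Dominates (b ++ List.replicate a.length 0) (List.replicate m 0 ++ a) := by
  refine ⟨by simp [hb], fun i => ?_⟩
  rcases le_or_gt i m with him | hmi
  · rw [List.take_append_of_le_length (by simpa using him), List.take_replicate]
    simp
  · have hleft : ((List.replicate m 0 ++ a).take i).sum ≤ a.sum := by
      calc ((List.replicate m 0 ++ a).take i).sum ≤ (List.replicate m 0 ++ a).sum :=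
            List.Sublist.sum_le_sum (List.take_sublist _ _) (by simp)
        _ = a.sum := by simp
    rw [List.take_append (l₁ := b), List.take_of_length_le (by omega : b.length ≤ i)]
    simp [List.take_replicate, hsum, hleft]

lemma eq_take_append_replicate_of_drop {b : List ℕ} {m : ℕ} (h : ∀ x ∈ b.drop m, x = 0) :
    b = b.take m ++ List.replicate (b.length - m) 0 := by
  conv_lhs => rw [← List.take_append_drop m b]
  rw [List.eq_replicate_iff.mpr ⟨List.length_drop, h⟩]

end Lists

section Truncation

open MvPolynomial

noncomputable def truncate {R : Type*} [CommSemiring R] (m : ℕ) :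
    MvPolynomial ℕ R →+* MvPolynomial ℕ R :=
  eval₂Hom C fun v => if v ≤ m then X v else 0

lemma truncate_X {R : Type*} [CommSemiring R] (m v : ℕ) :
    truncate (R := R) m (X v) = if v ≤ m then X v else 0 :=
  eval₂Hom_X' _ _ _

lemma hasFiniteMulSupport_pow {M : Type*} [Monoid M] (f : ℕ → M) {w : ℕ → ℕ}
    (hw : w.HasFiniteSupport) : Function.HasFiniteMulSupport fun v => f v ^ w v :=
  hw.subset fun v hv => by
    contrapose! hv
    simp [Function.notMem_support.mp hv]

lemma truncate_vmono {m : ℕ} {w : ℕ → ℕ} (hw : w.HasFiniteSupport) :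
    truncate m (vmono w) = ∏ᶠ v, truncate m (X v) ^ w v := by
  rw [vmono, map_finprod _ (hasFiniteMulSupport_pow _ hw)]
  simp only [map_pow]

lemma truncate_vmono_of_le {m : ℕ} {w : ℕ → ℕ} (h : ∀ v, w v ≠ 0 → v ≤ m) :
    truncate m (vmono w) = vmono w := by
  rw [truncate_vmono ((Set.finite_Iic m).subset h :), vmono]
  refine finprod_congr fun v => ?_
  by_cases hv : w v = 0
  · simp [hv]
  · rw [truncate_X, if_pos (h v hv)]

lemma truncate_vmono_eq_zero {m i : ℕ} {w : ℕ → ℕ} (hw : w.HasFiniteSupport)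
    (hi : m < i) (hwi : w i ≠ 0) : truncate m (vmono w) = 0 := by
  rw [truncate_vmono hw]
  exact finprod_eq_zero _ i (by rw [truncate_X, if_neg (by omega), zero_pow hwi])
    (hasFiniteMulSupport_pow _ hw)

end Truncation

section Fillings

lemma mem_skyline_iff {b : List ℕ} {p : ℕ × ℕ} : p ∈ skyline b ↔ SBox b p.1 p.2 := by
  obtain ⟨x, y⟩ := p
  simp only [skyline, Finset.mem_biUnion, Finset.mem_range, Finset.mem_image, SBox, shapeLen,
    Prod.mk.injEq]
  constructor
  · rintro ⟨i, hi, j, hj, rfl, rfl⟩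
    simp only [Nat.add_sub_cancel]
    omega
  · rintro ⟨h1, h2, h3, h4⟩
    exact ⟨x - 1, by omega, y - 1, by omega, by omega, by omega⟩

namespace LASSF

variable {b : List ℕ} {F : SVF}

lemma sbox_of_mem (hF : LASSF b F) {i j v : ℕ} (hv : v ∈ F i j) : SBox b i j :=
  (hF.1.1 i j).mp ⟨v, hv⟩

-- The first box of row `i` has maximum `i`, and rows weakly decrease from left to right.
lemma le_of_mem (hF : LASSF b F) {i j v : ℕ} (hv : v ∈ F i j) : v ≤ i := by
  induction j generalizing v with
  | zero => exact absurd (hF.sbox_of_mem hv).2.2.1 (by omega)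
  | succ j ih =>
    have hbox := hF.sbox_of_mem hv
    have hv_le : v ≤ anc F i (j + 1) := Finset.le_sup (f := id) hv
    rcases Nat.eq_zero_or_pos j with rfl | hj
    · exact hF.2 i hbox ▸ hv_le
    · have hbox' : SBox b i j := ⟨hbox.1, hbox.2.1, hj, by have := hbox.2.2.2; omega⟩
      obtain ⟨u, hu⟩ := (hF.1.1 i j).mpr hbox'
      calc v ≤ anc F i (j + 1) := hv_le
        _ ≤ infv F i j := hF.1.2.2.2.1 i j hbox' hbox
        _ ≤ u := Nat.sInf_le hu
        _ ≤ i := ih hu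

lemma self_mem (hF : LASSF b F) {i : ℕ} (hbox : SBox b i 1) : i ∈ F i 1 := by
  obtain ⟨u, hu, hsup⟩ := Finset.exists_mem_eq_sup _ ((hF.1.1 i 1).mpr hbox) id
  have : u = i := by rw [← hF.2 i hbox, anc, hsup]; rfl
  exact this ▸ hu

lemma le_length_of_wtF_ne_zero (hF : LASSF b F) {v : ℕ} (hv : wtF b F v ≠ 0) :
    v ≤ b.length := by
  obtain ⟨p, hp⟩ := Finset.card_ne_zero.mp hv
  rw [Finset.mem_filter] at hp
  exact (hF.le_of_mem hp.2).trans (mem_skyline_iff.mp hp.1).2.1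

lemma wtF_ne_zero (hF : LASSF b F) {i : ℕ} (hbox : SBox b i 1) : wtF b F i ≠ 0 :=
  Finset.card_ne_zero.mpr
    ⟨(i, 1), Finset.mem_filter.mpr ⟨mem_skyline_iff.mpr hbox, hF.self_mem hbox⟩⟩

end LASSF

lemma setOf_LASSF_finite (b : List ℕ) : {F : SVF | LASSF b F}.Finite := by
  have hsub : ∀ F : {F : SVF | LASSF b F}, ∀ p : skyline b,
      (F : SVF) p.1.1 p.1.2 ∈ (Finset.range (b.length + 1)).powerset := by
    rintro ⟨F, hF⟩ ⟨p, hp⟩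
    refine Finset.mem_powerset.mpr fun v hv => Finset.mem_range.mpr ?_
    have := (hF.le_of_mem hv).trans (mem_skyline_iff.mp hp).2.1
    omega
  let g (F : {F : SVF | LASSF b F}) (p : skyline b) : (Finset.range (b.length + 1)).powerset :=
    ⟨(F : SVF) p.1.1 p.1.2, hsub F p⟩
  have hg : Function.Injective g := by
    rintro ⟨F, hF⟩ ⟨G, hG⟩ hFG
    refine Subtype.ext (funext₂ fun i j => ?_)
    change F i j = G i j
    by_cases hbox : SBox b i j
    · exact congrArg Subtype.val (congrFun hFG ⟨(i, j), mem_skyline_iff.mpr hbox⟩)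
    · rw [Finset.not_nonempty_iff_eq_empty.mp (mt (hF.1.1 i j).mp hbox),
        Finset.not_nonempty_iff_eq_empty.mp (mt (hG.1.1 i j).mp hbox)]
  exact Set.finite_coe_iff.mp (Finite.of_injective g hg)

end Fillings

section Atoms

variable (b : List ℕ) (k : ℕ)

lemma shapeLen_append_replicate_zero :
    shapeLen (b ++ List.replicate k 0) = shapeLen b := by
  funext i
  rcases lt_or_ge (i - 1) b.length with h | h
  · exact List.getD_append _ _ _ _ h
  · rw [shapeLen, shapeLen, List.getD_append_right _ _ _ _ h, List.getD_eq_default b _ h]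
    simp only [List.getD_eq_getElem?_getD, List.getElem?_replicate]
    split_ifs <;> rfl

lemma sBox_append_replicate_zero : SBox (b ++ List.replicate k 0) = SBox b := by
  funext i j
  have hlen : 0 < shapeLen b i → i ≤ b.length := fun h => by
    by_contra hc
    rw [shapeLen, List.getD_eq_default _ _ (by omega)] at h
    omega
  simp only [SBox, shapeLen_append_replicate_zero, List.length_append, List.length_replicate,
    eq_iff_iff]
  constructor
  · rintro ⟨h1, -, h3, h4⟩
    exact ⟨h1, hlen (by omega), h3, h4⟩
  · rintro ⟨h1, h2, h3, h4⟩
    exact ⟨h1, by omega, h3, h4⟩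

lemma skyline_append_replicate_zero : skyline (b ++ List.replicate k 0) = skyline b := by
  ext p
  rw [mem_skyline_iff, mem_skyline_iff, sBox_append_replicate_zero]

lemma LASSF_append_replicate_zero : LASSF (b ++ List.replicate k 0) = LASSF b := by
  unfold LASSF SVSSF RowOK
  rw [sBox_append_replicate_zero, shapeLen_append_replicate_zero]

lemma atomPoly_append_replicate_zero : atomPoly (b ++ List.replicate k 0) = atomPoly b := by
  unfold atomPoly wtF sizeF
  rw [LASSF_append_replicate_zero, skyline_append_replicate_zero]
  simp

variable {b} {m : ℕ}

lemma truncate_atomPoly :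
    truncate m (atomPoly b) = ∑ᶠ F ∈ {F : SVF | LASSF b F},
      MvPolynomial.C (Polynomial.X ^ (sizeF b F - b.sum)) * truncate m (vmono (wtF b F)) := by
  refine ((truncate m).toAddMonoidHom.map_finsum_mem _ (setOf_LASSF_finite b)).trans ?_
  refine finsum_mem_congr rfl fun F _ => ?_
  simp only [RingHom.toAddMonoidHom_eq_coe, AddMonoidHom.coe_coe, map_mul, truncate,
    MvPolynomial.eval₂Hom_C]

lemma truncate_atomPoly_of_length_le (hb : b.length ≤ m) :
    truncate m (atomPoly b) = atomPoly b := by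
  rw [truncate_atomPoly, atomPoly]
  refine finsum_mem_congr rfl fun F hF => ?_
  rw [truncate_vmono_of_le fun v hv => (hF.le_length_of_wtF_ne_zero hv).trans hb]

lemma truncate_atomPoly_eq_zero {i : ℕ} (hi : m < i) (hbox : SBox b i 1) :
    truncate m (atomPoly b) = 0 := by
  rw [truncate_atomPoly]
  refine finsum_mem_eq_zero_of_forall_eq_zero fun F hF => ?_
  have hfin : (wtF b F).HasFiniteSupport :=
    (Set.finite_Iic b.length).subset fun v hv => hF.le_length_of_wtF_ne_zero hv
  rw [truncate_vmono_eq_zero hfin hi (hF.wtF_ne_zero hbox), mul_zero]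

end Atoms

lemma truncate_atomPoly_eq_zero_of_mem_drop {b : List ℕ} {m x : ℕ} (hx : x ∈ b.drop m)
    (hx0 : x ≠ 0) : truncate m (atomPoly b) = 0 := by
  obtain ⟨k, hk, rfl⟩ := List.getElem_of_mem hx
  rw [List.length_drop] at hk
  refine truncate_atomPoly_eq_zero (i := m + k + 1) (by omega) ⟨by omega, by omega, le_rfl, ?_⟩
  rw [shapeLen, Nat.add_sub_cancel, List.getD_eq_getElem _ _ (by omega)]
  simpa [Nat.one_le_iff_ne_zero] using hx0

lemma eq_take_append_replicate_of_truncate_atomPoly_ne_zero {b : List ℕ} {m n : ℕ}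
    (hlen : b.length = m + n) (h : truncate m (atomPoly b) ≠ 0) :
    b = b.take m ++ List.replicate n 0 := by
  have hb := eq_take_append_replicate_of_drop fun x hx =>
    by_contra fun hx0 => h (truncate_atomPoly_eq_zero_of_mem_drop hx hx0)
  rwa [hlen, Nat.add_sub_cancel_left] at hb

theorem stmt6 (a : List ℕ) (m : ℕ) :
    MvPolynomial.eval₂Hom (MvPolynomial.C)
        (fun v => if v ≤ m then (MvPolynomial.X v : MvPolynomial ℕ (Polynomial ℤ)) else 0)
        (quasiLascoux (List.replicate m 0 ++ a))
      = quasiGroth m (posPart a) := by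
  set c := List.replicate m 0 ++ a
  set S := {b : List ℕ | Dominates b c ∧ posPart b = posPart c}
  set T := {b : List ℕ | b.length = m ∧ posPart b = posPart a}
  set E : List ℕ → List ℕ := (· ++ List.replicate a.length 0)
  have hc : posPart c = posPart a := posPart_replicate_zero_append m a
  have hS : S.Finite := c.permutations.finite_toSet.subset fun b hb =>
    List.mem_permutations.mpr (perm_of_posPart_eq hb.1.1 hb.2)
  have hTS : E '' T ⊆ S := by
    rintro _ ⟨b, ⟨hlen, hb⟩, rfl⟩
    refine ⟨dominates_append_replicate hlen ?_, ?_⟩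
    · rw [← sum_posPart, hb, sum_posPart]
    · rw [posPart_append_replicate_zero, hb, hc]
  have hST : ∀ b ∈ S, truncate m (atomPoly b) ≠ 0 → b ∈ E '' T := by
    intro b hb hne
    have hlen : b.length = m + a.length := by rw [hb.1.1]; simp [c]
    have hb' := eq_take_append_replicate_of_truncate_atomPoly_ne_zero hlen hne
    refine ⟨b.take m, ⟨by simp [hlen], ?_⟩, hb'.symm⟩
    rw [← posPart_append_replicate_zero _ a.length, ← hb', hb.2, hc]
  change truncate m (quasiLascoux c) = _
  calc truncate m (quasiLascoux c) = ∑ᶠ b ∈ S, truncate m (atomPoly b) :=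
        (truncate m).toAddMonoidHom.map_finsum_mem _ hS
    _ = ∑ᶠ b ∈ E '' T, truncate m (atomPoly b) :=
        finsum_mem_inter_support_eq' _ _ _ fun b hb => ⟨(hST b · hb), (hTS ·)⟩
    _ = ∑ᶠ b ∈ T, truncate m (atomPoly (E b)) :=
        finsum_mem_image (List.append_left_injective _).injOn
    _ = quasiGroth m (posPart a) := finsum_mem_congr rfl fun b hb => by
        rw [atomPoly_append_replicate_zero, truncate_atomPoly_of_length_le hb.1.le]
end

section
/- For any weak composition a, lswap(a) = { b : sort(b) = sort(a) and w(b) ≤ w(a) }, where lswap(a) is the set of weak compositions obtainable from a by sequences of left swaps, sort(a) is the weakly decreasing rearrangement, w(a) is the minimal-length permutation sorting a, and ≤ is strong Bruhat order. -/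
def dsortList {n : ℕ} (a : Fin n → ℕ) : List ℕ :=
  (Multiset.sort (↑(List.ofFn a)) (· ≤ ·)).reverse

def dsort {n : ℕ} (a : Fin n → ℕ) : Fin n → ℕ := fun i => (dsortList a).getD i.1 0

def plen {n : ℕ} (σ : Equiv.Perm (Fin n)) : ℕ :=
  (Finset.univ.filter fun p : Fin n × Fin n => p.1 < p.2 ∧ σ p.2 < σ p.1).card

def IsMinSorter {n : ℕ} (a : Fin n → ℕ) (σ : Equiv.Perm (Fin n)) : Prop :=
  (∀ i, a i = dsort a (σ i)) ∧
    ∀ τ : Equiv.Perm (Fin n), (∀ i, a i = dsort a (τ i)) → plen σ ≤ plen τ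

def BruhatStep {n : ℕ} (u v : Equiv.Perm (Fin n)) : Prop :=
  ∃ i j : Fin n, i ≠ j ∧ v = u * Equiv.swap i j ∧ plen u < plen v

def Bruhat {n : ℕ} (u v : Equiv.Perm (Fin n)) : Prop :=
  Relation.ReflTransGen BruhatStep u v

def LSwapStepF {n : ℕ} (a b : Fin n → ℕ) : Prop :=
  ∃ i j : Fin n, i < j ∧ a i ≤ a j ∧ b = a ∘ (Equiv.swap i j)

/-!
Call `σ` a sorter of `a` if `a = dsort a ∘ σ`. Among the sorters of `a` there is exactly one that
keeps equal entries of `a` in their original order, namely `(Tuple.sort (toDual ∘ a))⁻¹`, and a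
sorter of minimal length has this property; every other sorter has an inversion between two equal
entries, and undoing it is a Bruhat step down to a shorter sorter, so all sorters lie above the
minimal one in Bruhat order.

A left swap `c ↦ c ∘ (i j)` with `c i < c j` turns a sorter `σ` of `c` into the sorter `σ (i j)`
of `c ∘ (i j)`, which is one Bruhat step below `σ`; this gives the inclusion `⊆`. Conversely,
a Bruhat step `u < u (i j)` is a left swap `dsort a ∘ u (i j) ↦ dsort a ∘ u`, because `dsort a` is
weakly decreasing, so walking down in Bruhat order from `w` to `wb` leads from `a = dsort a ∘ w`
to `b = dsort a ∘ wb` by left swaps.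
-/

open Finset Equiv

section

variable {n : ℕ}

def sortPerm (a : Fin n → ℕ) : Perm (Fin n) := Tuple.sort (OrderDual.toDual ∘ a)

lemma antitone_comp_sortPerm (a : Fin n → ℕ) : Antitone (a ∘ sortPerm a) :=
  monotone_toDual_comp_iff.mp (Tuple.monotone_sort _)

lemma dsortList_eq_ofFn (a : Fin n → ℕ) : dsortList a = List.ofFn (a ∘ sortPerm a) := by
  have hperm : (dsortList a).Perm (List.ofFn (a ∘ sortPerm a)) := by
    refine (List.reverse_perm _).trans ?_
    rw [← Multiset.coe_eq_coe, Multiset.sort_eq, Multiset.coe_eq_coe]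
    exact ((sortPerm a).ofFn_comp_perm a).symm
  refine hperm.eq_of_pairwise' (r := (· ≥ ·)) ?_ (antitone_comp_sortPerm a).sortedGE_ofFn.pairwise
  rw [dsortList, List.pairwise_reverse]
  exact Multiset.pairwise_sort _ _

lemma dsortList_comp_perm (a : Fin n → ℕ) (e : Perm (Fin n)) :
    dsortList (a ∘ e) = dsortList a := by
  rw [dsortList, dsortList, Multiset.coe_eq_coe.mpr (e.ofFn_comp_perm a)]

lemma dsort_eq_comp_sortPerm (a : Fin n → ℕ) : dsort a = a ∘ sortPerm a := by
  funext i
  simp [dsort, dsortList_eq_ofFn]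

lemma dsort_antitone (a : Fin n → ℕ) : Antitone (dsort a) :=
  dsort_eq_comp_sortPerm a ▸ antitone_comp_sortPerm a

lemma dsort_comp_perm (a : Fin n → ℕ) (e : Perm (Fin n)) : dsort (a ∘ e) = dsort a := by
  funext i
  simp only [dsort, dsortList_comp_perm]

lemma comp_swap_eq_self {α β : Type*} [DecidableEq α] {a : α → β} {x y : α} (h : a x = a y) :
    a ∘ swap x y = a := by
  funext k
  simp only [Function.comp_apply, swap_apply_def]
  split_ifs <;> simp_all

def inversions (σ : Perm (Fin n)) : Finset (Fin n × Fin n) :=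
  univ.filter fun p => p.1 < p.2 ∧ σ p.2 < σ p.1

lemma mem_inversions {σ : Perm (Fin n)} {p : Fin n × Fin n} :
    p ∈ inversions σ ↔ p.1 < p.2 ∧ σ p.2 < σ p.1 := by
  simp [inversions]

lemma plen_eq_card_inversions (σ : Perm (Fin n)) : plen σ = #(inversions σ) := rfl

lemma plen_lt_plen_mul_swap {v : Perm (Fin n)} {i j : Fin n} (hij : i < j) (h : v i < v j) :
    plen v < plen (v * swap i j) := by
  set s := swap i j
  -- `g` injects the inversions of `v` into those of `v * s` other than `(i, j)`: it moves an
  -- inversion by `s` unless `s` would reverse the order of its two positions.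
  let g : Fin n × Fin n → Fin n × Fin n := fun p => if s p.1 < s p.2 then (s p.1, s p.2) else p
  have hg : ∀ p : Fin n × Fin n, p.1 < p.2 → g (g p) = p := by
    intro p hp
    by_cases h1 : s p.1 < s p.2
    · simp [g, h1, s, hp]
    · simp [g, h1]
  have hmaps : Set.MapsTo g (inversions v) ((inversions (v * s)).erase (i, j)) := by
    intro p hp
    rw [mem_coe, mem_inversions] at hp
    obtain ⟨hp1, hp2⟩ := hp
    simp only [mem_coe, mem_erase, mem_inversions, Perm.mul_apply, g]
    split_ifs with h1
    · refine ⟨?_, h1, by simpa [s] using hp2⟩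
      rw [Ne, Prod.ext_iff, swap_apply_eq_iff, swap_apply_eq_iff, swap_apply_left,
        swap_apply_right]
      rintro ⟨hi, hj⟩
      rw [hi, hj] at hp1
      exact hp1.not_gt hij
    -- Here `s` reverses the order of `p`, so `p = (i, k)` or `p = (k, j)` with `i < k < j`,
    -- and `v i < v j` transports the inversion.
    · refine ⟨by rintro rfl; exact (h.trans hp2).false, hp1, ?_⟩
      grind
  have hinj : Set.InjOn g (inversions v) := fun p hp q hq hpq => by
    rw [← hg p (mem_inversions.mp hp).1, ← hg q (mem_inversions.mp hq).1, hpq]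
  have hmem : (i, j) ∈ inversions (v * s) := by
    simpa [mem_inversions, s, hij] using h
  rw [plen_eq_card_inversions, plen_eq_card_inversions, ← card_erase_add_one hmem]
  exact Nat.lt_succ_of_le (card_le_card_of_injOn g hmaps hinj)

lemma plen_mul_swap_lt_plen {v : Perm (Fin n)} {i j : Fin n} (hij : i < j) (h : v j < v i) :
    plen (v * swap i j) < plen v := by
  simpa [mul_assoc] using plen_lt_plen_mul_swap (v := v * swap i j) hij (by simpa using h)

def IsSorter (a : Fin n → ℕ) (σ : Perm (Fin n)) : Prop :=
  ∀ i, a i = dsort a (σ i)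

lemma isSorter_inv_sortPerm (a : Fin n → ℕ) : IsSorter a (sortPerm a)⁻¹ := fun i => by
  simp [dsort_eq_comp_sortPerm]

lemma IsSorter.comp_perm {a : Fin n → ℕ} {σ : Perm (Fin n)} (h : IsSorter a σ)
    (e : Perm (Fin n)) : IsSorter (a ∘ e) (σ * e) := fun i => by
  rw [dsort_comp_perm]
  exact h (e i)

lemma IsSorter.apply_le_apply {a : Fin n → ℕ} {σ : Perm (Fin n)} (h : IsSorter a σ)
    {x y : Fin n} (hxy : σ x ≤ σ y) : a y ≤ a x := by
  rw [h x, h y]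
  exact dsort_antitone a hxy

lemma IsSorter.eq_inv_sortPerm {a : Fin n → ℕ} {σ : Perm (Fin n)} (h : IsSorter a σ)
    (hstable : ∀ x y, x < y → a x = a y → σ x ≤ σ y) : σ = (sortPerm a)⁻¹ := by
  refine inv_eq_iff_eq_inv.mp (Tuple.eq_sort_iff.mpr ⟨?_, fun i j hij hij' => ?_⟩)
  · have hsorted : a ∘ ⇑σ⁻¹ = dsort a := funext fun k => by
      rw [Function.comp_apply, h, Perm.coe_inv, apply_symm_apply]
    rw [Function.comp_assoc, monotone_toDual_comp_iff, hsorted]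
    exact dsort_antitone a
  · by_contra hji
    have := hstable _ _ (lt_of_le_of_ne (not_lt.mp hji) (by simpa using hij.ne')) hij'.symm
    simp only [Perm.coe_inv, apply_symm_apply] at this
    exact this.not_gt hij

lemma exists_isMinSorter (a : Fin n → ℕ) : ∃ σ, IsMinSorter a σ := by
  obtain ⟨σ, hσ, hmin⟩ :=
    Set.exists_min_image {σ | IsSorter a σ} plen (Set.toFinite _) ⟨_, isSorter_inv_sortPerm a⟩
  exact ⟨σ, hσ, hmin⟩

lemma IsMinSorter.isSorter {a : Fin n → ℕ} {m : Perm (Fin n)} (hm : IsMinSorter a m) :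
    IsSorter a m :=
  hm.1

lemma IsMinSorter.apply_le_apply_of_eq {a : Fin n → ℕ} {m : Perm (Fin n)}
    (hm : IsMinSorter a m) {x y : Fin n} (hxy : x < y) (he : a x = a y) : m x ≤ m y := by
  by_contra hlt
  have hsorter : IsSorter a (m * swap x y) :=
    comp_swap_eq_self he ▸ hm.isSorter.comp_perm (swap x y)
  exact (plen_mul_swap_lt_plen hxy (not_le.mp hlt)).not_ge (hm.2 _ hsorter)

lemma bruhat_of_isSorter {a : Fin n → ℕ} {m τ : Perm (Fin n)} (hm : IsMinSorter a m)
    (hτ : IsSorter a τ) : Bruhat m τ := by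
  induction hk : plen τ using Nat.strong_induction_on generalizing τ with
  | _ k ih =>
  by_cases hinv : ∃ x y, x < y ∧ a x = a y ∧ τ y < τ x
  · obtain ⟨x, y, hxy, he, hlt⟩ := hinv
    have hsorter : IsSorter a (τ * swap x y) := comp_swap_eq_self he ▸ hτ.comp_perm (swap x y)
    have hplen := plen_mul_swap_lt_plen hxy hlt
    refine (ih _ (hk ▸ hplen) hsorter rfl).tail ⟨x, y, hxy.ne, ?_, hplen⟩
    rw [mul_assoc, swap_mul_self, mul_one]
  · push Not at hinv
    rw [hm.isSorter.eq_inv_sortPerm fun _ _ => hm.apply_le_apply_of_eq, hτ.eq_inv_sortPerm hinv]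
    exact .refl

lemma bruhat_of_lSwapStep {b c : Fin n → ℕ} {wb wc : Perm (Fin n)} (hcb : LSwapStepF c b)
    (hc : IsMinSorter c wc) (hb : IsMinSorter b wb) : Bruhat wb wc := by
  obtain ⟨i, j, hij, hle, rfl⟩ := hcb
  rcases hle.eq_or_lt with he | hlt
  · rw [comp_swap_eq_self he] at hb
    exact bruhat_of_isSorter hb hc.isSorter
  have hwc : wc j < wc i := lt_of_not_ge fun h => (hc.isSorter.apply_le_apply h).not_gt hlt
  refine (bruhat_of_isSorter hb (hc.isSorter.comp_perm _)).tail
    ⟨i, j, hij.ne, ?_, plen_mul_swap_lt_plen hij hwc⟩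
  rw [mul_assoc, swap_mul_self, mul_one]

lemma LSwapStepF.dsortList_eq {b c : Fin n → ℕ} (h : LSwapStepF c b) :
    dsortList b = dsortList c := by
  obtain ⟨i, j, -, -, rfl⟩ := h
  exact dsortList_comp_perm c _

lemma lSwapStep_of_bruhatStep {d : Fin n → ℕ} (hd : Antitone d) {u v : Perm (Fin n)}
    (h : BruhatStep u v) : LSwapStepF (d ∘ v) (d ∘ u) := by
  obtain ⟨i, j, hne, rfl, hlt⟩ := h
  wlog hij : i < j generalizing i j
  · rw [swap_comm] at hlt ⊢
    exact this j i hne.symm hlt (hne.lt_or_gt.resolve_left hij)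
  have hu : u i < u j := lt_of_not_ge fun h =>
    (plen_mul_swap_lt_plen hij (h.lt_of_ne (u.injective.ne hij.ne'))).not_gt hlt
  refine ⟨i, j, hij, hd (by simpa using hu.le), ?_⟩
  rw [Function.comp_assoc, ← Perm.coe_mul, mul_assoc, swap_mul_self, mul_one]

lemma reflTransGen_lSwapStep_of_bruhat {d : Fin n → ℕ} (hd : Antitone d) {u v : Perm (Fin n)}
    (h : Bruhat u v) : Relation.ReflTransGen LSwapStepF (d ∘ v) (d ∘ u) := by
  induction h with
  | refl => rfl
  | tail _ hstep ih => exact ih.head (lSwapStep_of_bruhatStep hd hstep)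

end

theorem stmt9 {n : ℕ} (a : Fin n → ℕ) (w : Equiv.Perm (Fin n)) (hw : IsMinSorter a w) :
    {b | Relation.ReflTransGen LSwapStepF a b} =
      {b : Fin n → ℕ | dsortList b = dsortList a ∧
        ∃ wb : Equiv.Perm (Fin n), IsMinSorter b wb ∧ Bruhat wb w} := by
  ext b
  constructor
  · intro hab
    induction hab with
    | refl => exact ⟨rfl, w, hw, .refl⟩
    | tail _ hcb ih =>
      obtain ⟨hsort, wc, hwc, hbr⟩ := ih
      obtain ⟨wb, hwb⟩ := exists_isMinSorter _
      exact ⟨hcb.dsortList_eq.trans hsort, wb, hwb, (bruhat_of_lSwapStep hcb hwc hwb).trans hbr⟩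
  · rintro ⟨hsort, wb, hwb, hbr⟩
    have hdsort : dsort b = dsort a := funext fun i => by simp only [dsort, hsort]
    have ha : dsort a ∘ w = a := (funext hw.1).symm
    have hb : dsort a ∘ wb = b := hdsort ▸ (funext hwb.1).symm
    have hreach := reflTransGen_lSwapStep_of_bruhat (dsort_antitone a) hbr
    rwa [ha, hb] at hreach
end

section
/- Destandardization is a retraction onto the meson-highest fillings: for a weak composition a and any T ∈ LASSF(a), the destandardization dst(T) lies in LASSF(a) and is meson-highest; moreover dst(T) = T if and only if T is meson-highest. -/
def Appears (F : SVF) (v : ℕ) : Prop := ∃ i j, v ∈ F i j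

noncomputable def upVal (F : SVF) (v : ℕ) : ℕ := sInf {k | v < k ∧ Appears F k}

def HighestAt (F : SVF) (v : ℕ) : Prop :=
  ∃ i j, v ∈ F i j ∧ (∀ i' j', v ∈ F i' j' → j ≤ j') ∧
    ((j = 1 ∧ anc F i 1 = v) ∨
      ∃ i' j', upVal F v ∈ F i' j' ∧ j ≤ j' ∧ (i', j') ≠ (i, j))

def MesonHighest (F : SVF) : Prop := ∀ v, Appears F v → HighestAt F v

def replaceUp (F : SVF) (v : ℕ) : SVF := fun i j =>
  if v ∈ F i j then insert (v + 1) ((F i j).erase v) else F i j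

def DStep (F F' : SVF) : Prop :=
  ∃ v, Appears F v ∧ ¬ HighestAt F v ∧
    (∀ w, Appears F w → ¬ HighestAt F w → v ≤ w) ∧ F' = replaceUp F v

namespace Stmt12Aux

def phiv (v x : ℕ) : ℕ := if x = v then v + 1 else x

lemma phiv_ge (v x : ℕ) : x ≤ phiv v x := by unfold phiv; split <;> omega

lemma phiv_le (v x : ℕ) : phiv v x ≤ x + 1 := by unfold phiv; split <;> omega

lemma phiv_mono {v x y : ℕ} (h : x ≤ y) : phiv v x ≤ phiv v y := by
  unfold phiv; split <;> split <;> omega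

lemma phiv_reflect_lt {v x y : ℕ} (h : phiv v x < phiv v y) : x < y := by
  unfold phiv at h; revert h; split <;> split <;> omega

lemma phiv_lt {v x y : ℕ} (h : x < y) (h2 : x = v → y ≠ v + 1) : phiv v x < phiv v y := by
  unfold phiv; split <;> split <;> omega

lemma phiv_of_ne {v x : ℕ} (h : x ≠ v) : phiv v x = x := if_neg h

lemma phiv_self (v : ℕ) : phiv v v = v + 1 := if_pos rfl

variable {F : SVF} {v : ℕ}

lemma anc_mem {i j : ℕ} (h : (F i j).Nonempty) : anc F i j ∈ F i j := by
  obtain ⟨b, hb, he⟩ := Finset.exists_mem_eq_sup (F i j) h id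
  rw [anc, he]; exact hb

lemma anc_pos_mem {i j : ℕ} (h : 0 < anc F i j) : anc F i j ∈ F i j := by
  rcases (F i j).eq_empty_or_nonempty with he | hne
  · rw [anc, he] at h; simp at h
  · exact anc_mem hne

lemma le_anc {i j w : ℕ} (h : w ∈ F i j) : w ≤ anc F i j := Finset.le_sup (f := id) h

lemma infv_mem {i j : ℕ} (h : (F i j).Nonempty) : infv F i j ∈ F i j := by
  have := Nat.sInf_mem (s := ((F i j : Finset ℕ) : Set ℕ)) (Finset.coe_nonempty.mpr h)
  exact_mod_cast this

lemma infv_le {i j w : ℕ} (h : w ∈ F i j) : infv F i j ≤ w :=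
  Nat.sInf_le (by exact_mod_cast h)

lemma infv_pos_mem {i j : ℕ} (h : 0 < infv F i j) : infv F i j ∈ F i j := by
  rcases (F i j).eq_empty_or_nonempty with he | hne
  · rw [infv, he] at h; simp at h
  · exact infv_mem hne

lemma mem_replaceUp_cases {i j w : ℕ} (h : w ∈ replaceUp F v i j) :
    (w ∈ F i j ∧ w ≠ v) ∨ (w = v + 1 ∧ v ∈ F i j) := by
  unfold replaceUp at h
  by_cases hm : v ∈ F i j
  · rw [if_pos hm] at h
    rcases Finset.mem_insert.mp h with rfl | h
    · exact Or.inr ⟨rfl, hm⟩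
    · exact Or.inl ⟨Finset.mem_of_mem_erase h, (Finset.mem_erase.mp h).1⟩
  · rw [if_neg hm] at h
    exact Or.inl ⟨h, fun he => hm (he ▸ h)⟩

lemma replaceUp_nonempty {i j : ℕ} : (replaceUp F v i j).Nonempty ↔ (F i j).Nonempty := by
  unfold replaceUp
  by_cases hm : v ∈ F i j
  · rw [if_pos hm]; exact ⟨fun _ => ⟨v, hm⟩, fun _ => Finset.insert_nonempty _ _⟩
  · rw [if_neg hm]

lemma mem_replaceUp_of_mem {i j w : ℕ} (h : w ∈ F i j) (hw : w ≠ v) :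
    w ∈ replaceUp F v i j := by
  unfold replaceUp
  by_cases hm : v ∈ F i j
  · rw [if_pos hm]; exact Finset.mem_insert_of_mem (Finset.mem_erase.mpr ⟨hw, h⟩)
  · rw [if_neg hm]; exact h

lemma succ_mem_replaceUp {i j : ℕ} (h : v ∈ F i j) : v + 1 ∈ replaceUp F v i j := by
  unfold replaceUp; rw [if_pos h]; exact Finset.mem_insert_self _ _

lemma anc_rep (hvpos : 0 < v) (i j : ℕ) :
    anc (replaceUp F v) i j = phiv v (anc F i j) := by
  by_cases hm : v ∈ F i j
  · have hne : (F i j).Nonempty := ⟨v, hm⟩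
    show (replaceUp F v i j).sup id = _
    unfold replaceUp; rw [if_pos hm, Finset.sup_insert]
    by_cases ha : anc F i j = v
    · have hle : ((F i j).erase v).sup id ≤ v := Finset.sup_le (fun w hw => by
        have := le_anc (F := F) (Finset.mem_of_mem_erase hw)
        simp only [id_eq]; omega)
      rw [ha, phiv_self]
      exact sup_eq_left.mpr (le_trans hle (by simp))
    · have hvlt : v < anc F i j := lt_of_le_of_ne (le_anc hm) (Ne.symm ha)
      have hamem : anc F i j ∈ (F i j).erase v := Finset.mem_erase.mpr ⟨ha, anc_mem hne⟩
      have h1 : ((F i j).erase v).sup id = anc F i j :=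
        le_antisymm (Finset.sup_le fun w hw => le_anc (Finset.mem_of_mem_erase hw))
          (Finset.le_sup (f := id) hamem)
      rw [h1, phiv_of_ne ha]
      exact sup_eq_right.mpr (by simp only [id_eq]; omega)
  · have heq : replaceUp F v i j = F i j := if_neg hm
    have ha : anc F i j ≠ v := fun h => hm (h ▸ anc_pos_mem (h ▸ hvpos))
    show (replaceUp F v i j).sup id = _
    rw [heq, phiv_of_ne ha]; rfl

lemma infv_rep (hvpos : 0 < v) (i j : ℕ) :
    infv (replaceUp F v) i j = phiv v (infv F i j) := by
  by_cases hm : v ∈ F i j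
  · have hne : (F i j).Nonempty := ⟨v, hm⟩
    have hinfle : infv F i j ≤ v := infv_le hm
    have heq : replaceUp F v i j = insert (v + 1) ((F i j).erase v) := if_pos hm
    show sInf ((replaceUp F v i j : Finset ℕ) : Set ℕ) = _
    rw [heq]
    by_cases hi : infv F i j = v
    · have key : ∀ w ∈ (insert (v + 1) ((F i j).erase v) : Finset ℕ), v + 1 ≤ w := by
        intro w hw
        rcases Finset.mem_insert.mp hw with rfl | hw
        · exact le_refl _
        · have h1 := infv_le (F := F) (Finset.mem_of_mem_erase hw)
          have h2 := (Finset.mem_erase.mp hw).1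
          omega
      have hmem : (v + 1 : ℕ) ∈ ((insert (v + 1) ((F i j).erase v) : Finset ℕ) : Set ℕ) := by
        exact_mod_cast Finset.mem_insert_self _ _
      rw [hi, phiv_self]
      exact le_antisymm (Nat.sInf_le hmem)
        (le_csInf ⟨_, hmem⟩ (fun b hb => key b (by exact_mod_cast hb)))
    · have hlt : infv F i j < v := lt_of_le_of_ne hinfle hi
      have hmem' : infv F i j ∈ insert (v + 1) ((F i j).erase v) :=
        Finset.mem_insert_of_mem (Finset.mem_erase.mpr ⟨hi, infv_mem hne⟩)
      rw [phiv_of_ne hi]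
      refine le_antisymm (Nat.sInf_le (by exact_mod_cast hmem')) ?_
      refine le_csInf ⟨_, by exact_mod_cast hmem'⟩ (fun b hb => ?_)
      rcases Finset.mem_insert.mp (by exact_mod_cast hb : b ∈ insert (v+1) ((F i j).erase v)) with rfl | hb'
      · omega
      · exact infv_le (Finset.mem_of_mem_erase hb')
  · have heq : replaceUp F v i j = F i j := if_neg hm
    have hi : infv F i j ≠ v := fun h => hm (h ▸ infv_pos_mem (h ▸ hvpos))
    show sInf ((replaceUp F v i j : Finset ℕ) : Set ℕ) = _
    rw [heq, phiv_of_ne hi]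
    rfl

lemma dstep_preserves (a : List ℕ) (F : SVF) (hF : LASSF a F) (v : ℕ)
    (hv : Appears F v) (hnh : ¬ HighestAt F v) : LASSF a (replaceUp F v) := by
  obtain ⟨h1, h2, h3, h4, h5, h6, h7⟩ := hF.1
  have hfc := hF.2
  obtain ⟨iv, jv, hvmem⟩ := hv
  have hvpos : 0 < v := h2 _ _ _ hvmem
  -- leftmost column of v
  have hJne : Set.Nonempty {j | ∃ i, v ∈ F i j} := ⟨jv, iv, hvmem⟩
  set j0 := sInf {j | ∃ i, v ∈ F i j} with hj0def
  obtain ⟨i0, hi0⟩ : ∃ i, v ∈ F i j0 := Nat.sInf_mem hJne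
  have h_left : ∀ i j, v ∈ F i j → j0 ≤ j := fun i j h => Nat.sInf_le ⟨i, h⟩
  have hvcol : ∀ i, v ∈ F i j0 → i = i0 := by
    intro i h; by_contra hne; exact h3 j0 i i0 hne v h hi0
  have hAB : ¬ ((j0 = 1 ∧ anc F i0 1 = v) ∨
      ∃ i' j', upVal F v ∈ F i' j' ∧ j0 ≤ j' ∧ (i', j') ≠ (i0, j0)) := by
    intro h; exact hnh ⟨i0, j0, hi0, h_left, by
      rcases h with ⟨hj, ha⟩ | h
      · exact Or.inl ⟨hj, ha⟩
      · exact Or.inr h⟩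
  have hA : ¬ (j0 = 1 ∧ anc F i0 1 = v) := fun h => hAB (Or.inl h)
  have hB : ∀ i' j', upVal F v ∈ F i' j' → j0 ≤ j' → i' = i0 ∧ j' = j0 := by
    intro i' j' hm hle
    by_contra h
    exact hAB (Or.inr ⟨i', j', hm, hle, fun he => h (by
      obtain ⟨h1', h2'⟩ := Prod.mk.injEq .. ▸ he
      exact ⟨h1', h2'⟩)⟩)
  have hv1occ : ∀ i j, v + 1 ∈ F i j → j0 ≤ j → i = i0 ∧ j = j0 := by
    intro i j hm hle
    have hup : upVal F v = v + 1 := by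
      have hs1 : upVal F v ≤ v + 1 := Nat.sInf_le ⟨Nat.lt_succ_self v, i, j, hm⟩
      have hs2 : v < upVal F v :=
        (Nat.sInf_mem (⟨v + 1, Nat.lt_succ_self v, i, j, hm⟩ :
          Set.Nonempty {k | v < k ∧ Appears F k})).1
      omega
    exact hB i j (hup ▸ hm) hle
  have hbox_of_mem : ∀ i j w, w ∈ F i j → SBox a i j := fun i j w h => (h1 i j).1 ⟨w, h⟩
  have hj0_ge1 : 1 ≤ j0 := (hbox_of_mem _ _ _ hi0).2.2.1
  have hanc1 : ∀ i, anc F i 1 ≠ v := by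
    intro i h
    have hm : v ∈ F i 1 := h ▸ anc_pos_mem (h ▸ hvpos)
    have hle : j0 ≤ 1 := h_left _ _ hm
    have hj : j0 = 1 := le_antisymm hle hj0_ge1
    have hii : i = i0 := hvcol i (by rw [hj]; exact hm)
    exact hA ⟨hj, by rw [← hii]; exact h⟩
  have hnoclash : ∀ i j i' j', j ≤ j' → anc F i j = v → anc F i' j' ≠ v + 1 := by
    intro i j i' j' hle h h'
    have hm : v ∈ F i j := h ▸ anc_pos_mem (h ▸ hvpos)
    have hm' : v + 1 ∈ F i' j' := h' ▸ anc_pos_mem (h' ▸ (by omega : 0 < v + 1))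
    have hj : j0 ≤ j := h_left _ _ hm
    obtain ⟨hi', hj'⟩ := hv1occ i' j' hm' (le_trans hj hle)
    have hjj : j = j0 := le_antisymm (hj' ▸ hle) hj
    have hii : i = i0 := hvcol i (hjj ▸ hm)
    rw [hii, hjj] at h; rw [hi', hj'] at h'
    omega
  have hancrep := anc_rep (F := F) (v := v) hvpos
  have hinfrep := infv_rep (F := F) (v := v) hvpos
  set F' := replaceUp F v with hF'
  -- inversion triple transfer
  have inv_pres : ∀ be al ga : ℕ, InvTriple be al ga → (ga = v → al ≠ v + 1) →
      (be = v → ga ≠ v + 1) → InvTriple (phiv v be) (phiv v al) (phiv v ga) := by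
    intro be al ga ht hc1 hc2
    rcases ht with ⟨hga, hal⟩ | ⟨hal, hbe⟩
    · exact Or.inl ⟨phiv_lt hga hc1, phiv_mono hal⟩
    · exact Or.inr ⟨phiv_mono hal, phiv_lt hbe hc2⟩
  refine ⟨⟨?_, ?_, ?_, ?_, ?_, ?_, ?_⟩, ?_⟩
  · -- nonempty iff SBox
    intro i j; rw [replaceUp_nonempty]; exact h1 i j
  · -- positivity
    intro i j w h
    rcases mem_replaceUp_cases h with ⟨hw, _⟩ | ⟨rfl, _⟩
    · exact h2 _ _ _ hw
    · omega
  · -- column distinctness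
    intro j i i' hne w hw hw'
    rcases mem_replaceUp_cases hw with ⟨hwF, hwv⟩ | ⟨rfl, hvF⟩
    · rcases mem_replaceUp_cases hw' with ⟨hwF', _⟩ | ⟨he, hvF'⟩
      · exact h3 j i i' hne w hwF hwF'
      · -- w = v+1 ∈ F i j, v ∈ F i' j
        subst he
        have hj : j0 ≤ j := h_left _ _ hvF'
        obtain ⟨hii, hjj⟩ := hv1occ i j hwF hj
        subst hjj
        exact hne (hii.trans (hvcol i' hvF').symm)
    · rcases mem_replaceUp_cases hw' with ⟨hwF', hne'⟩ | ⟨_, hvF'⟩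
      · have hj : j0 ≤ j := h_left _ _ hvF
        obtain ⟨hii, hjj⟩ := hv1occ i' j hwF' hj
        subst hjj
        exact hne ((hvcol i hvF).trans hii.symm)
      · exact h3 j i i' hne v hvF hvF'
  · -- rows weakly decreasing
    intro i j hb1 hb2
    rw [hancrep, hinfrep]
    exact phiv_mono (h4 i j hb1 hb2)
  · -- type 1 triples
    intro i i' j hii hb1 hb2 hb3 hsh
    rw [hancrep, hancrep, hancrep]
    exact inv_pres _ _ _ (h5 i i' j hii hb1 hb2 hb3 hsh)
      (hnoclash i' (j+1) i (j+1) le_rfl) (hnoclash i j i' (j+1) (by omega))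
  · -- type 2 triples
    intro i i' j hii hb1 hb2 hb3 hsh
    rw [hancrep, hancrep, hancrep]
    exact inv_pres _ _ _ (h6 i i' j hii hb1 hb2 hb3 hsh)
      (hnoclash i j i' (j+1) (by omega)) (hnoclash i' j i j le_rfl)
  · -- free entries condition
    intro i j w hbox hw hwa i' hbox' hlt hwlt hrow
    rw [hancrep] at hwa
    rw [hancrep, hancrep] at hlt
    rw [hancrep] at hwlt
    obtain ⟨hr1, hr2⟩ := hrow
    rw [hinfrep] at hr1
    rw [hancrep] at hr2
    have hltF : anc F i' j < anc F i j := phiv_reflect_lt hlt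
    rcases mem_replaceUp_cases hw with ⟨hwF, hwv⟩ | ⟨rfl, hvF⟩
    · -- case Y : w ∈ F i j, w ≠ v
      have hwa' : w ≠ anc F i j := by
        intro he; subst he; exact hwa (phiv_of_ne hwv).symm
      have hwlt' : w < anc F i' j := by
        by_cases hav : anc F i' j = v
        · rw [hav, phiv_self] at hwlt; omega
        · rwa [phiv_of_ne hav] at hwlt
      refine h7 i j w hbox hwF hwa' i' hbox' hltF hwlt' ⟨?_, ?_⟩
      · rcases hr1 with hj1 | hle
        · exact Or.inl hj1
        · by_cases hj1 : j = 1
          · exact Or.inl hj1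
          · right
            by_cases hiv : infv F i' (j - 1) = v
            · rw [hiv, phiv_self] at hle
              rcases Nat.lt_or_ge w (v + 1) with hwlt2 | hwge
              · rw [hiv]; omega
              · -- w = v + 1, contradiction with positions
                have hwe : w = v + 1 := by omega
                have hvm : v ∈ F i' (j - 1) := hiv ▸ infv_pos_mem (hiv ▸ hvpos)
                have hj' : j0 ≤ j - 1 := h_left _ _ hvm
                have hjge : 1 ≤ j := hbox.2.2.1
                obtain ⟨hii, hjj⟩ := hv1occ i j (hwe ▸ hwF) (by omega)
                omega
            · rwa [phiv_of_ne hiv] at hle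
      · rcases hr2 with hb | hle
        · exact Or.inl hb
        · exact Or.inr (le_trans (phiv_ge v _) hle)
    · -- case X : w = v + 1, v ∈ F i j
      have hj0j : j0 ≤ j := h_left _ _ hvF
      have hancne : v ≠ anc F i j := by
        intro he; rw [← he, phiv_self] at hwa; exact hwa rfl
      have hwlt' : v < anc F i' j := by
        have := phiv_le v (anc F i' j); omega
      refine h7 i j v hbox hvF hancne i' hbox' hltF hwlt' ⟨?_, ?_⟩
      · rcases hr1 with hj1 | hle
        · exact Or.inl hj1
        · right
          have := phiv_le v (infv F i' (j - 1)); omega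
      · rcases hr2 with hb | hle
        · exact Or.inl hb
        · right
          by_cases hav : anc F i' (j + 1) = v
          · omega
          · rw [phiv_of_ne hav] at hle
            rcases Nat.lt_or_ge (anc F i' (j + 1)) (v + 1) with hlt2 | hge
            · omega
            · have he : anc F i' (j + 1) = v + 1 := by omega
              have hm : v + 1 ∈ F i' (j + 1) :=
                he ▸ anc_pos_mem (he ▸ (by omega : 0 < v + 1))
              obtain ⟨_, hjj⟩ := hv1occ i' (j + 1) hm (by omega)
              omega
  · -- first column anchors
    intro i hb
    rw [hancrep, hfc i hb, phiv_of_ne]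
    intro he
    exact hanc1 i (by rw [hfc i hb, he])

end Stmt12Aux


theorem stmt12 (a : List ℕ) (T : SVF) (hT : LASSF a T) :
    (∀ S : SVF, Relation.ReflTransGen DStep T S → (∀ S', ¬ DStep S S') →
        LASSF a S ∧ MesonHighest S) ∧
    ((∀ S', ¬ DStep T S') ↔ MesonHighest T) := by
  have key : ∀ F F' : SVF, LASSF a F → DStep F F' → LASSF a F' := by
    rintro F F' hF ⟨v, hv, hnh, -, rfl⟩
    exact Stmt12Aux.dstep_preserves a F hF v hv hnh
  have term_mh : ∀ S : SVF, (∀ S', ¬ DStep S S') → MesonHighest S := by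
    intro S h v hv
    by_contra hnh
    have hne : Set.Nonempty {w | Appears S w ∧ ¬ HighestAt S w} := ⟨v, hv, hnh⟩
    have hmem := Nat.sInf_mem hne
    exact h (replaceUp S (sInf {w | Appears S w ∧ ¬ HighestAt S w}))
      ⟨_, hmem.1, hmem.2, fun w hw hnw => Nat.sInf_le ⟨hw, hnw⟩, rfl⟩
  constructor
  · intro S hreach hterm
    have hL : LASSF a S := by
      clear hterm
      induction hreach with
      | refl => exact hT
      | tail _ h2 ih => exact key _ _ ih h2
    exact ⟨hL, term_mh S hterm⟩
  · refine ⟨fun h => term_mh T h, fun hmh S' hd => ?_⟩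
    obtain ⟨v, hap, hnh, -, -⟩ := hd
    exact hnh (hmh v hap)
end
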